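/- arXiv:1501.00961 — 5 statements merged into one kernel-verified Lean document; each statement's English description precedes it below -/
import Mathlib

section
/- Suppose a = (a_n) is an evanescent sequence and b = (b_ω) is an admissible gauge with respect to a. Then for any family of reals (c_ω)_{ω∈Ω*} with |c_ω| ≤ b_ω for all ω, the Haar series Σ_{ω∈Ω*} c_ω h_ω converges and represents a unique function in C^a(Ω); moreover, the set H_b of all functions obtained in this way is a compact subset of the Banach space C^a(Ω). -/
open Filter Set MeasureTheory

abbrev Omega : Type := ℕ → Bool

def shift (x : Omega) : Omega := fun n => x (n + 1)

open Classical in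
/-- The metric `d_a` on `Ω`: distance `a m` where `m` is the first disagreement. -/
noncomputable def dA (a : ℕ → ℝ) (x y : Omega) : ℝ :=
  if h : x = y then 0 else a (Nat.find (Function.ne_iff.mp h))

/-- A strictly decreasing sequence of positive reals converging to zero. -/
structure GoodSeq where
  a : ℕ → ℝ
  pos : ∀ n, 0 < a n
  anti : StrictAnti a
  lim : Tendsto a atTop (nhds 0)

/-- Membership in `C^a(Ω)`: Lipschitz with respect to the metric `d_a`. -/
def MemCa (a : ℕ → ℝ) (f : Omega → ℝ) : Prop :=
  ∃ K : ℝ, ∀ x y, |f x - f y| ≤ K * dA a x y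

def lipSet (a : ℕ → ℝ) (f : Omega → ℝ) : Set ℝ :=
  {K | 0 ≤ K ∧ ∀ x y, |f x - f y| ≤ K * dA a x y}

/-- The least Lipschitz constant w.r.t. `d_a`. -/
noncomputable def lipA (a : ℕ → ℝ) (f : Omega → ℝ) : ℝ := sInf (lipSet a f)

/-- The norm of `C^a(Ω)`: sup norm plus least Lipschitz constant. -/
noncomputable def caNorm (a : ℕ → ℝ) (f : Omega → ℝ) : ℝ := (⨆ x, |f x|) + lipA a f

lemma dA_self (a : ℕ → ℝ) (x : Omega) : dA a x x = 0 := by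
  unfold dA; exact dif_pos rfl

lemma dA_pos (p : GoodSeq) {x y : Omega} (hxy : x ≠ y) : 0 < dA p.a x y := by
  unfold dA; rw [dif_neg hxy]; exact p.pos _

lemma dA_nonneg (p : GoodSeq) (x y : Omega) : 0 ≤ dA p.a x y := by
  unfold dA; split
  · exact le_rfl
  · exact (p.pos _).le

lemma dA_le_a0 (p : GoodSeq) (x y : Omega) : dA p.a x y ≤ p.a 0 := by
  unfold dA; split
  · exact (p.pos 0).le
  · exact p.anti.antitone (Nat.zero_le _)

lemma lipSet_nonempty (p : GoodSeq) {f : Omega → ℝ} (hf : MemCa p.a f) :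
    (lipSet p.a f).Nonempty := by
  obtain ⟨K, hK⟩ := hf
  exact ⟨max K 0, le_max_right _ _, fun x y => (hK x y).trans
    (mul_le_mul_of_nonneg_right (le_max_left _ _) (dA_nonneg p x y))⟩

lemma lipSet_bddBelow (a : ℕ → ℝ) (f : Omega → ℝ) : BddBelow (lipSet a f) :=
  ⟨0, fun _ hK => hK.1⟩

lemma lipA_nonneg (p : GoodSeq) {f : Omega → ℝ} (hf : MemCa p.a f) : 0 ≤ lipA p.a f :=
  le_csInf (lipSet_nonempty p hf) fun _ hK => hK.1

lemma lipA_le (p : GoodSeq) {f : Omega → ℝ} {K : ℝ} (hK : K ∈ lipSet p.a f) :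
    lipA p.a f ≤ K := csInf_le (lipSet_bddBelow _ _) hK

lemma lipA_spec (p : GoodSeq) {f : Omega → ℝ} (hf : MemCa p.a f) (x y : Omega) :
    |f x - f y| ≤ lipA p.a f * dA p.a x y := by
  rcases eq_or_ne x y with rfl | hxy
  · simp [dA_self]
  · have hd : 0 < dA p.a x y := dA_pos p hxy
    have h1 : |f x - f y| / dA p.a x y ≤ lipA p.a f :=
      le_csInf (lipSet_nonempty p hf) (fun K hK => (div_le_iff₀ hd).2 (hK.2 x y))
    calc |f x - f y| = |f x - f y| / dA p.a x y * dA p.a x y := by field_simp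
      _ ≤ _ := mul_le_mul_of_nonneg_right h1 hd.le

lemma bddAbove_abs (p : GoodSeq) {f : Omega → ℝ} (hf : MemCa p.a f) :
    BddAbove (Set.range fun x => |f x|) := by
  refine ⟨|f (fun _ => false)| + lipA p.a f * p.a 0, ?_⟩
  rintro r ⟨x, rfl⟩
  have h1 : |f x| ≤ |f (fun _ => false)| + |f x - f (fun _ => false)| := by
    have := abs_add_le (f (fun _ => false)) (f x - f (fun _ => false))
    simpa using this
  refine h1.trans (add_le_add le_rfl ?_)
  refine (lipA_spec p hf x _).trans ?_
  exact mul_le_mul_of_nonneg_left (dA_le_a0 p _ _) (lipA_nonneg p hf)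

lemma le_caSup (p : GoodSeq) {f : Omega → ℝ} (hf : MemCa p.a f) (x : Omega) :
    |f x| ≤ ⨆ y, |f y| := le_ciSup (bddAbove_abs p hf) x

/-- The Lipschitz functions form a linear subspace of `Ω → ℝ`. -/
noncomputable def caSub (a : ℕ → ℝ) : Submodule ℝ (Omega → ℝ) where
  carrier := {f | MemCa a f}
  add_mem' := by
    rintro f g ⟨K, hK⟩ ⟨L, hL⟩
    refine ⟨K + L, fun x y => ?_⟩
    calc |(f + g) x - (f + g) y| = |(f x - f y) + (g x - g y)| := by
          simp only [Pi.add_apply]; ring_nf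
      _ ≤ |f x - f y| + |g x - g y| := abs_add_le _ _
      _ ≤ K * dA a x y + L * dA a x y := add_le_add (hK x y) (hL x y)
      _ = (K + L) * dA a x y := by ring
  zero_mem' := ⟨0, by simp⟩
  smul_mem' := by
    rintro c f ⟨K, hK⟩
    refine ⟨|c| * K, fun x y => ?_⟩
    calc |(c • f) x - (c • f) y| = |c| * |f x - f y| := by
          simp only [Pi.smul_apply, smul_eq_mul]
          rw [← abs_mul]; ring_nf
      _ ≤ |c| * (K * dA a x y) := mul_le_mul_of_nonneg_left (hK x y) (abs_nonneg c)
      _ = |c| * K * dA a x y := by ring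

/-- The Banach space `C^a(Ω)` of `d_a`-Lipschitz functions. -/
def CaSpace (p : GoodSeq) : Type := ↥(caSub p.a)

noncomputable instance (p : GoodSeq) : AddCommGroup (CaSpace p) :=
  inferInstanceAs (AddCommGroup ↥(caSub p.a))

noncomputable instance (p : GoodSeq) : Module ℝ (CaSpace p) :=
  inferInstanceAs (Module ℝ ↥(caSub p.a))

/-- The underlying function of an element of `C^a(Ω)`. -/
def CaSpace.fn {p : GoodSeq} (F : CaSpace p) : Omega → ℝ := Subtype.val F

lemma CaSpace.memCa {p : GoodSeq} (F : CaSpace p) : MemCa p.a F.fn := Subtype.prop F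

lemma lipA_zero (p : GoodSeq) : lipA p.a 0 = 0 := by
  refine le_antisymm (lipA_le p ⟨le_rfl, fun x y => by simp [dA_nonneg]⟩)
    (lipA_nonneg p ⟨0, by simp⟩)

lemma abs_neg_sub (f : Omega → ℝ) (x y : Omega) : |(-f) x - (-f) y| = |f x - f y| := by
  simp only [Pi.neg_apply]
  rw [show -f x - -f y = -(f x - f y) by ring, abs_neg]

lemma lipSet_neg (a : ℕ → ℝ) (f : Omega → ℝ) : lipSet a (-f) = lipSet a f := by
  ext K
  constructor <;> intro h <;> refine ⟨h.1, fun x y => ?_⟩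
  · have := h.2 x y
    rwa [abs_neg_sub] at this
  · have := h.2 x y
    rw [abs_neg_sub]
    exact this

/-- The Lipschitz norm on `C^a(Ω)` as an `AddGroupNorm`. -/
noncomputable def caAGN (p : GoodSeq) : AddGroupNorm (CaSpace p) where
  toFun F := caNorm p.a F.fn
  map_zero' := by
    show caNorm p.a (0 : CaSpace p).fn = 0
    have h0 : (0 : CaSpace p).fn = (0 : Omega → ℝ) := rfl
    rw [h0]
    unfold caNorm
    rw [lipA_zero]
    simp
  add_le' F G := by
    show caNorm p.a (F + G).fn ≤ caNorm p.a F.fn + caNorm p.a G.fn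
    have hadd : (F + G).fn = F.fn + G.fn := rfl
    unfold caNorm
    rw [hadd]
    have h1 : (⨆ x, |(F.fn + G.fn) x|) ≤ (⨆ x, |F.fn x|) + ⨆ x, |G.fn x| := by
      refine ciSup_le fun x => ?_
      calc |(F.fn + G.fn) x| ≤ |F.fn x| + |G.fn x| := abs_add_le _ _
        _ ≤ _ := add_le_add (le_caSup p F.memCa x) (le_caSup p G.memCa x)
    have h2 : lipA p.a (F.fn + G.fn) ≤ lipA p.a F.fn + lipA p.a G.fn := by
      refine lipA_le p ⟨add_nonneg (lipA_nonneg p F.memCa) (lipA_nonneg p G.memCa),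
        fun x y => ?_⟩
      calc |(F.fn + G.fn) x - (F.fn + G.fn) y|
          = |(F.fn x - F.fn y) + (G.fn x - G.fn y)| := by
            simp only [Pi.add_apply]; ring_nf
        _ ≤ |F.fn x - F.fn y| + |G.fn x - G.fn y| := abs_add_le _ _
        _ ≤ lipA p.a F.fn * dA p.a x y + lipA p.a G.fn * dA p.a x y :=
            add_le_add (lipA_spec p F.memCa x y) (lipA_spec p G.memCa x y)
        _ = (lipA p.a F.fn + lipA p.a G.fn) * dA p.a x y := by ring
    linarith
  neg' F := by
    show caNorm p.a (-F).fn = caNorm p.a F.fn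
    have hneg : (-F).fn = -(F.fn) := rfl
    unfold caNorm
    rw [hneg]
    congr 1
    · exact iSup_congr fun x => by simp
    · unfold lipA; rw [lipSet_neg]
  eq_zero_of_map_eq_zero' F h := by
    have h' : caNorm p.a F.fn = 0 := h
    have hsup0 : 0 ≤ ⨆ x, |F.fn x| :=
      le_trans (abs_nonneg _) (le_caSup p F.memCa (fun _ => false))
    have hlip0 := lipA_nonneg p F.memCa
    unfold caNorm at h'
    have hsup : (⨆ x, |F.fn x|) = 0 := by linarith
    have hz : ∀ x, F.fn x = 0 := by
      intro x
      have := le_caSup p F.memCa x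
      rw [hsup] at this
      exact abs_nonpos_iff.mp this
    exact Subtype.ext (funext hz)

noncomputable instance (p : GoodSeq) : NormedAddCommGroup (CaSpace p) :=
  (caAGN p).toNormedAddCommGroup

noncomputable instance (p : GoodSeq) : MeasurableSpace (CaSpace p) := borel (CaSpace p)

/-- The Haar function `h_ω = (χ_{[ω0]} − χ_{[ω1]})/2` for a finite word `ω`. -/
noncomputable def haar (w : List Bool) (x : Omega) : ℝ :=
  if ∀ i : Fin w.length, x (i : ℕ) = w.get i then
    (if x w.length = false then 1 / 2 else -(1 / 2)) else 0

/-- `b̄_n = max_{|ω|=n} b_ω`. -/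
noncomputable def gaugeMax (b : List Bool → ℝ) (n : ℕ) : ℝ :=
  sSup {r | ∃ w : List Bool, w.length = n ∧ r = b w}

/-- `b̲_n = min_{|ω|=n} b_ω`. -/
noncomputable def gaugeMin (b : List Bool → ℝ) (n : ℕ) : ℝ :=
  sInf {r | ∃ w : List Bool, w.length = n ∧ r = b w}

/-!
At a point `x` only one Haar function of each length is nonzero, namely the one indexed by the
prefix of `x` of that length, where it equals `±1/2`. So if `|c_ω| ≤ u_{|ω|}` with `u` summable,
the Haar series at `x` converges absolutely, and two points whose first disagreement is at
position `m` have sums differing by at most the tail `∑_{n ≥ m} u_n`. The Lipschitz constant for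
`d_a` is thus controlled by `sup_m (∑_{n ≥ m} u_n) / a_m`. Evanescence forces `a_{n+1} ≤ a_n / 2`
eventually, so for `u_n = max_{|ω|=n} b_ω = o(a_n)` the tails are `o(a_m)`: every coefficient
family in the box `|c_ω| ≤ b_ω` gives a `C^a` function, and perturbing the finitely many
coefficients of length `< M` by less than `δ` moves it by little in `C^a` norm. The map from the
compact product box to `C^a(Ω)` is therefore continuous and its image `H_b` is compact.
-/

namespace HilbertBrick

open Topology

def prefixWord (x : Omega) (n : ℕ) : List Bool := List.ofFn fun i : Fin n => x i

@[simp] lemma length_prefixWord (x : Omega) (n : ℕ) : (prefixWord x n).length = n := by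
  simp [prefixWord]

lemma prefixWord_injective (x : Omega) : Function.Injective (prefixWord x) := fun m n h => by
  simpa using congrArg List.length h

lemma prefixWord_congr {x y : Omega} {n : ℕ} (h : ∀ i < n, x i = y i) :
    prefixWord x n = prefixWord y n := by
  unfold prefixWord
  congr 1
  funext i
  exact h i i.isLt

lemma haar_prefixWord (x : Omega) (n : ℕ) :
    haar (prefixWord x n) x = if x n = false then 1 / 2 else -(1 / 2) := by
  have hcyl : ∀ i : Fin (prefixWord x n).length, x i = (prefixWord x n).get i :=
    fun i => (List.get_ofFn _ i).symm
  rw [haar, if_pos hcyl, length_prefixWord]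

lemma haar_eq_zero_of_ne_prefixWord {w : List Bool} {x : Omega}
    (h : w ≠ prefixWord x w.length) : haar w x = 0 := by
  refine if_neg fun hcyl => h (List.ext_get (by simp) fun i h₁ _ => ?_)
  rw [← hcyl ⟨i, h₁⟩]
  simp [prefixWord]

lemma abs_haar_le (w : List Bool) (x : Omega) : |haar w x| ≤ 1 / 2 := by
  unfold haar
  split_ifs <;> norm_num

noncomputable def haarSum (c : List Bool → ℝ) (x : Omega) : ℝ :=
  ∑' n, c (prefixWord x n) * haar (prefixWord x n) x

noncomputable def tail (u : ℕ → ℝ) (m : ℕ) : ℝ := ∑' k, u (k + m)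

section HaarSum

variable {u : ℕ → ℝ} {c : List Bool → ℝ}

lemma nonneg_of_abs_le (hc : ∀ w, |c w| ≤ u w.length) (n : ℕ) : 0 ≤ u n := by
  simpa using (abs_nonneg _).trans (hc (List.replicate n false))

lemma abs_haarTerm_le (hc : ∀ w, |c w| ≤ u w.length) (x : Omega) (n : ℕ) :
    |c (prefixWord x n) * haar (prefixWord x n) x| ≤ u n / 2 := by
  rw [abs_mul]
  have hcn := hc (prefixWord x n)
  rw [length_prefixWord] at hcn
  nlinarith [abs_nonneg (c (prefixWord x n)), abs_haar_le (prefixWord x n) x]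

lemma summable_haarTerm (hu : Summable u) (hc : ∀ w, |c w| ≤ u w.length) (x : Omega) :
    Summable fun n => c (prefixWord x n) * haar (prefixWord x n) x :=
  Summable.of_norm_bounded (hu.div_const 2) (abs_haarTerm_le hc x)

lemma hasSum_haarSum (hu : Summable u) (hc : ∀ w, |c w| ≤ u w.length) (x : Omega) :
    HasSum (fun w => c w * haar w x) (haarSum c x) := by
  have hvanish : ∀ w ∉ Set.range (prefixWord x), c w * haar w x = 0 := fun w hw => by
    rw [haar_eq_zero_of_ne_prefixWord fun h => hw ⟨w.length, h.symm⟩, mul_zero]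
  exact ((prefixWord_injective x).hasSum_iff hvanish).mp (summable_haarTerm hu hc x).hasSum

lemma abs_haarSum_le (hu : Summable u) (hc : ∀ w, |c w| ≤ u w.length) (x : Omega) :
    |haarSum c x| ≤ tail u 0 := by
  refine (summable_haarTerm hu hc x).hasSum.norm_le_of_bounded hu.hasSum fun n => ?_
  have := abs_haarTerm_le hc x n
  have := nonneg_of_abs_le hc n
  rw [Real.norm_eq_abs]
  linarith

lemma abs_haarSum_sub_le (hu : Summable u) (hc : ∀ w, |c w| ≤ u w.length) {x y : Omega}
    {m : ℕ} (hxy : ∀ i < m, x i = y i) : |haarSum c x - haarSum c y| ≤ tail u m := by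
  set t : ℕ → ℝ := fun n =>
    c (prefixWord x n) * haar (prefixWord x n) x - c (prefixWord y n) * haar (prefixWord y n) y
  have hsum : HasSum t (haarSum c x - haarSum c y) :=
    (summable_haarTerm hu hc x).hasSum.sub (summable_haarTerm hu hc y).hasSum
  -- the terms of index `n < m` only see the common prefix of `x` and `y`
  have hhead : ∑ n ∈ Finset.range m, t n = 0 := Finset.sum_eq_zero fun n hn => by
    have hn : n < m := Finset.mem_range.mp hn
    simp only [t, haar_prefixWord, prefixWord_congr fun i hi => hxy i (hi.trans hn), hxy n hn,
      sub_self]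
  have hshift : HasSum (fun k => t (k + m)) (haarSum c x - haarSum c y) := by
    simpa [hhead] using (hasSum_nat_add_iff' m).mpr hsum
  refine hshift.norm_le_of_bounded ((summable_nat_add_iff m).mpr hu).hasSum fun k => ?_
  calc ‖t (k + m)‖ ≤ u (k + m) / 2 + u (k + m) / 2 :=
        (abs_sub _ _).trans (add_le_add (abs_haarTerm_le hc x _) (abs_haarTerm_le hc y _))
    _ = u (k + m) := by ring

lemma haarSum_sub {c' : List Bool → ℝ} {u' : ℕ → ℝ} (hu : Summable u) (hu' : Summable u')
    (hc : ∀ w, |c w| ≤ u w.length) (hc' : ∀ w, |c' w| ≤ u' w.length) (x : Omega) :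
    haarSum (c - c') x = haarSum c x - haarSum c' x := by
  rw [haarSum, haarSum, haarSum, ← (summable_haarTerm hu hc x).tsum_sub
    (summable_haarTerm hu' hc' x)]
  simp only [Pi.sub_apply, sub_mul]

end HaarSum

section Tail

variable {a u : ℕ → ℝ} {m : ℕ}

lemma le_geometric_of_halving (ha : ∀ n ≥ m, a (n + 1) ≤ a n / 2) (k : ℕ) :
    a (k + m) ≤ a m * (1 / 2) ^ k := by
  induction k with
  | zero => simp
  | succ k ih =>
    calc a (k + 1 + m) = a (k + m + 1) := by rw [Nat.add_right_comm]
      _ ≤ a (k + m) / 2 := ha _ (Nat.le_add_left m k)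
      _ ≤ a m * (1 / 2) ^ (k + 1) := by rw [pow_succ]; linarith

lemma le_geometric_of_le_mul_of_halving {ε : ℝ} (hε : 0 ≤ ε) (ha : ∀ n ≥ m, a (n + 1) ≤ a n / 2)
    (hu : ∀ n ≥ m, u n ≤ ε * a n) (k : ℕ) : u (k + m) ≤ ε * a m * (1 / 2) ^ k :=
  calc u (k + m) ≤ ε * a (k + m) := hu _ (Nat.le_add_left m k)
    _ ≤ ε * (a m * (1 / 2) ^ k) := mul_le_mul_of_nonneg_left (le_geometric_of_halving ha k) hε
    _ = ε * a m * (1 / 2) ^ k := by ring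

lemma summable_of_le_mul_of_halving (hu0 : ∀ n, 0 ≤ u n) {ε : ℝ} (hε : 0 ≤ ε)
    (ha : ∀ n ≥ m, a (n + 1) ≤ a n / 2) (hu : ∀ n ≥ m, u n ≤ ε * a n) : Summable u :=
  (summable_nat_add_iff m).mp <| Summable.of_nonneg_of_le (fun _ => hu0 _)
    (le_geometric_of_le_mul_of_halving hε ha hu) (summable_geometric_two.mul_left _)

lemma tail_le_of_le_mul_of_halving (hu0 : ∀ n, 0 ≤ u n) {ε : ℝ} (hε : 0 ≤ ε)
    (ha : ∀ n ≥ m, a (n + 1) ≤ a n / 2) (hu : ∀ n ≥ m, u n ≤ ε * a n) :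
    tail u m ≤ 2 * ε * a m :=
  calc tail u m ≤ ∑' k, ε * a m * (1 / 2) ^ k :=
        Summable.tsum_le_tsum (le_geometric_of_le_mul_of_halving hε ha hu)
          ((summable_nat_add_iff m).mpr (summable_of_le_mul_of_halving hu0 hε ha hu))
          (summable_geometric_two.mul_left _)
    _ = 2 * ε * a m := by rw [tsum_mul_left, tsum_geometric_two]; ring

lemma summable_of_halving (hhalf : ∀ᶠ n in atTop, a (n + 1) ≤ a n / 2) (hu0 : ∀ n, 0 ≤ u n)
    (hu : ∀ ε > 0, ∀ᶠ n in atTop, u n ≤ ε * a n) : Summable u := by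
  obtain ⟨M, hM⟩ := eventually_atTop.mp (hhalf.and (hu 1 one_pos))
  exact summable_of_le_mul_of_halving hu0 zero_le_one (fun n hn => (hM n hn).1)
    fun n hn => (hM n hn).2

lemma eventually_tail_le_of_halving (hhalf : ∀ᶠ n in atTop, a (n + 1) ≤ a n / 2)
    (hu0 : ∀ n, 0 ≤ u n) (hu : ∀ ε > 0, ∀ᶠ n in atTop, u n ≤ ε * a n) {ε : ℝ} (hε : 0 < ε) :
    ∀ᶠ m in atTop, tail u m ≤ ε * a m := by
  obtain ⟨M, hM⟩ := eventually_atTop.mp (hhalf.and (hu (ε / 2) (half_pos hε)))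
  refine eventually_atTop.mpr ⟨M, fun m hm => ?_⟩
  have := tail_le_of_le_mul_of_halving hu0 (half_pos hε).le (fun n hn => (hM n (hm.trans hn)).1)
    fun n hn => (hM n (hm.trans hn)).2
  linarith

end Tail

lemma tail_le_tsum {u : ℕ → ℝ} (hu0 : ∀ n, 0 ≤ u n) (hu : Summable u) (m : ℕ) :
    tail u m ≤ ∑' n, u n := by
  rw [← hu.sum_add_tsum_nat_add m, tail]
  linarith [Finset.sum_nonneg fun n (_ : n ∈ Finset.range m) => hu0 n]

lemma eventually_le_mul_of_isLittleO {α : Type*} {l : Filter α} {f g : α → ℝ}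
    (h : f =o[l] g) (hg : ∀ x, 0 ≤ g x) {ε : ℝ} (hε : 0 < ε) : ∀ᶠ x in l, f x ≤ ε * g x :=
  (h.bound hε).mono fun x hx => by
    rw [Real.norm_eq_abs, Real.norm_of_nonneg (hg x)] at hx
    exact (le_abs_self _).trans hx

lemma eventually_le_half_of_isBigO (p : GoodSeq)
    (heva : (fun n => p.a (n + 1) / p.a n) =O[atTop]
      fun n => ((2 : ℝ) ^ (2 ^ (n + 2) : ℕ))⁻¹) :
    ∀ᶠ n in atTop, p.a (n + 1) ≤ p.a n / 2 := by
  have hexp : Tendsto (fun n : ℕ => 2 ^ (n + 2)) atTop atTop :=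
    (tendsto_pow_atTop_atTop_of_one_lt one_lt_two).comp (tendsto_add_atTop_nat 2)
  have hratio : Tendsto (fun n => p.a (n + 1) / p.a n) atTop (𝓝 0) :=
    heva.trans_tendsto <| tendsto_inv_atTop_zero.comp <|
      (tendsto_pow_atTop_atTop_of_one_lt one_lt_two).comp hexp
  filter_upwards [hratio.eventually (ge_mem_nhds one_half_pos)] with n hn
  rwa [div_le_iff₀ (p.pos n), one_div_mul_eq_div] at hn

lemma tail_le_mul_of_sum_le (p : GoodSeq) {u : ℕ → ℝ} (hu0 : ∀ n, 0 ≤ u n) (hu : Summable u)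
    {M : ℕ} {D ε : ℝ} (hε : 0 ≤ ε) (hD : ∑ n ∈ Finset.range M, u n ≤ D)
    (htail : ∀ m ≥ M, tail u m ≤ ε * p.a m) (m : ℕ) :
    tail u m ≤ (D / p.a M + ε) * p.a m := by
  have haM := p.pos M
  have hD0 : 0 ≤ D := (Finset.sum_nonneg fun n _ => hu0 n).trans hD
  rcases le_or_gt M m with hm | hm
  · refine (htail m hm).trans (mul_le_mul_of_nonneg_right ?_ (p.pos m).le)
    exact le_add_of_nonneg_left (by positivity)
  · calc tail u m ≤ ∑' n, u n := tail_le_tsum hu0 hu m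
      _ = ∑ n ∈ Finset.range M, u n + tail u M := (hu.sum_add_tsum_nat_add M).symm
      _ ≤ D + ε * p.a M := add_le_add hD (htail M le_rfl)
      _ = (D / p.a M + ε) * p.a M := by field_simp
      _ ≤ (D / p.a M + ε) * p.a m :=
          mul_le_mul_of_nonneg_left (p.anti.antitone hm.le) (by positivity)

open Classical in
lemma exists_dA_eq_of_ne (a : ℕ → ℝ) {x y : Omega} (hxy : x ≠ y) :
    ∃ m, dA a x y = a m ∧ ∀ i < m, x i = y i :=
  ⟨_, dif_neg hxy, fun _ hi => not_not.mp (Nat.find_min _ hi)⟩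

section CaBound

variable (p : GoodSeq) {u : ℕ → ℝ} {c : List Bool → ℝ} {L : ℝ}

lemma abs_haarSum_sub_le_mul_dA (hu : Summable u) (hc : ∀ w, |c w| ≤ u w.length)
    (hL : ∀ m, tail u m ≤ L * p.a m) (x y : Omega) :
    |haarSum c x - haarSum c y| ≤ L * dA p.a x y := by
  rcases eq_or_ne x y with rfl | hxy
  · simp [dA_self]
  · obtain ⟨m, hd, hagree⟩ := exists_dA_eq_of_ne p.a hxy
    rw [hd]
    exact (abs_haarSum_sub_le hu hc hagree).trans (hL m)

lemma memCa_haarSum (hu : Summable u) (hc : ∀ w, |c w| ≤ u w.length)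
    (hL : ∀ m, tail u m ≤ L * p.a m) : MemCa p.a (haarSum c) :=
  ⟨L, abs_haarSum_sub_le_mul_dA p hu hc hL⟩

lemma norm_le_of_fn_eq_haarSum (hu : Summable u) (hc : ∀ w, |c w| ≤ u w.length)
    (hL : ∀ m, tail u m ≤ L * p.a m) {F : CaSpace p} (hF : F.fn = haarSum c) :
    ‖F‖ ≤ L * (p.a 0 + 1) := by
  have hL0 : 0 ≤ L := nonneg_of_mul_nonneg_left
    ((tsum_nonneg fun k => nonneg_of_abs_le hc _).trans (hL 0)) (p.pos 0)
  have hsup : ∀ x, |F.fn x| ≤ L * p.a 0 := fun x => by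
    rw [hF]
    exact (abs_haarSum_le hu hc x).trans (hL 0)
  have hlip : L ∈ lipSet p.a F.fn := ⟨hL0, hF ▸ abs_haarSum_sub_le_mul_dA p hu hc hL⟩
  calc ‖F‖ = (⨆ x, |F.fn x|) + lipA p.a F.fn := rfl
    _ ≤ L * p.a 0 + L := add_le_add (ciSup_le hsup) (lipA_le p hlip)
    _ = L * (p.a 0 + 1) := by ring

end CaBound

lemma le_gaugeMax (b : List Bool → ℝ) (w : List Bool) : b w ≤ gaugeMax b w.length := by
  refine le_csSup (BddAbove.mono ?_ ((List.finite_length_eq Bool w.length).image b).bddAbove)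
    ⟨w, rfl, rfl⟩
  rintro _ ⟨v, hv, rfl⟩
  exact ⟨v, hv, rfl⟩

lemma gaugeMax_nonneg {b : List Bool → ℝ} (hbpos : ∀ w, 0 < b w) (n : ℕ) : 0 ≤ gaugeMax b n := by
  simpa using (hbpos _).le.trans (le_gaugeMax b (List.replicate n false))

def coeffBox (b : List Bool → ℝ) : Set (List Bool → ℝ) := {c | ∀ w, |c w| ≤ b w}

lemma isCompact_coeffBox (b : List Bool → ℝ) : IsCompact (coeffBox b) := by
  have hpi : coeffBox b = Set.univ.pi fun w => Set.Icc (-b w) (b w) := by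
    ext c
    simp only [coeffBox, Set.mem_ofPred_eq, Set.mem_univ_pi, Set.mem_Icc, abs_le]
  rw [hpi]
  exact isCompact_univ_pi fun w => isCompact_Icc

lemma abs_le_gaugeMax_of_mem_coeffBox {b c : List Bool → ℝ} (hc : c ∈ coeffBox b)
    (w : List Bool) : |c w| ≤ gaugeMax b w.length :=
  (hc w).trans (le_gaugeMax b w)

section Brick

variable (p : GoodSeq) {b : List Bool → ℝ}

lemma summable_gaugeMax (hhalf : ∀ᶠ n in atTop, p.a (n + 1) ≤ p.a n / 2)
    (hbpos : ∀ w, 0 < b w) (hadm : (fun n => gaugeMax b n) =o[atTop] p.a) :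
    Summable (gaugeMax b) :=
  summable_of_halving hhalf (gaugeMax_nonneg hbpos)
    fun _ hε => eventually_le_mul_of_isLittleO hadm (fun n => (p.pos n).le) hε

lemma eventually_tail_gaugeMax_le (hhalf : ∀ᶠ n in atTop, p.a (n + 1) ≤ p.a n / 2)
    (hbpos : ∀ w, 0 < b w) (hadm : (fun n => gaugeMax b n) =o[atTop] p.a) {ε : ℝ}
    (hε : 0 < ε) : ∀ᶠ m in atTop, tail (gaugeMax b) m ≤ ε * p.a m :=
  eventually_tail_le_of_halving hhalf (gaugeMax_nonneg hbpos)
    (fun _ hε => eventually_le_mul_of_isLittleO hadm (fun n => (p.pos n).le) hε) hε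

lemma exists_tail_gaugeMax_le_mul (hhalf : ∀ᶠ n in atTop, p.a (n + 1) ≤ p.a n / 2)
    (hbpos : ∀ w, 0 < b w) (hadm : (fun n => gaugeMax b n) =o[atTop] p.a) :
    ∃ L, ∀ m, tail (gaugeMax b) m ≤ L * p.a m := by
  obtain ⟨M, hM⟩ := eventually_atTop.mp (eventually_tail_gaugeMax_le p hhalf hbpos hadm one_pos)
  exact ⟨_, tail_le_mul_of_sum_le p (gaugeMax_nonneg hbpos)
    (summable_gaugeMax p hhalf hbpos hadm) zero_le_one le_rfl hM⟩

noncomputable def brickMap {L : ℝ} (hsum : Summable (gaugeMax b))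
    (hL : ∀ m, tail (gaugeMax b) m ≤ L * p.a m) (c : coeffBox b) : CaSpace p :=
  ⟨haarSum c.1, memCa_haarSum p hsum (abs_le_gaugeMax_of_mem_coeffBox c.2) hL⟩

lemma setOf_hasSum_eq_range_brickMap {L : ℝ} (hsum : Summable (gaugeMax b))
    (hL : ∀ m, tail (gaugeMax b) m ≤ L * p.a m) :
    {F : CaSpace p | ∃ c : List Bool → ℝ, (∀ w, |c w| ≤ b w) ∧
      ∀ x, HasSum (fun w : List Bool => c w * haar w x) (F.fn x)} =
      Set.range (brickMap p hsum hL) := by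
  ext F
  constructor
  · rintro ⟨c, hc, hF⟩
    refine ⟨⟨c, hc⟩, Subtype.ext (funext fun x => ?_)⟩
    exact (hasSum_haarSum hsum (abs_le_gaugeMax_of_mem_coeffBox hc) x).unique (hF x)
  · rintro ⟨c, rfl⟩
    exact ⟨c.1, c.2, hasSum_haarSum hsum (abs_le_gaugeMax_of_mem_coeffBox c.2)⟩

/-- Coefficients of length `< M` that differ by at most `δ` contribute the `M δ / a_M` term; the
higher ones contribute the tail `ε`. -/
lemma norm_brickMap_sub_le (hbpos : ∀ w, 0 < b w) {L : ℝ} (hsum : Summable (gaugeMax b))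
    (hL : ∀ m, tail (gaugeMax b) m ≤ L * p.a m) {M : ℕ} {δ ε : ℝ} (hδ : 0 ≤ δ) (hε : 0 ≤ ε)
    (htail : ∀ m ≥ M, tail (gaugeMax b) m ≤ ε * p.a m) {c c₀ : coeffBox b}
    (hclose : ∀ w : List Bool, w.length < M → |c.1 w - c₀.1 w| ≤ δ) :
    ‖brickMap p hsum hL c - brickMap p hsum hL c₀‖ ≤ (M * δ / p.a M + 2 * ε) * (p.a 0 + 1) := by
  set u : ℕ → ℝ := fun n => if n < M then δ else 2 * gaugeMax b n
  have hfar : ∀ n ≥ M, u n = 2 * gaugeMax b n := fun n hn => if_neg (not_lt.mpr hn)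
  have hu0 : ∀ n, 0 ≤ u n := fun n => by
    by_cases hn : n < M
    · simpa [u, hn] using hδ
    · rw [hfar n (not_lt.mp hn)]
      linarith [gaugeMax_nonneg hbpos n]
  have hbound : ∀ w, |(c.1 - c₀.1) w| ≤ u w.length := fun w => by
    by_cases hw : w.length < M
    · simpa [u, hw] using hclose w hw
    · rw [hfar _ (not_lt.mp hw), Pi.sub_apply, two_mul]
      exact (abs_sub _ _).trans (add_le_add (abs_le_gaugeMax_of_mem_coeffBox c.2 w)
        (abs_le_gaugeMax_of_mem_coeffBox c₀.2 w))
  have hu : Summable u := (hsum.mul_left 2).congr_cofinite <| Nat.cofinite_eq_atTop ▸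
    eventually_atTop.mpr ⟨M, fun n hn => (hfar n hn).symm⟩
  have hhead : ∑ n ∈ Finset.range M, u n ≤ M * δ := by
    simpa using Finset.sum_le_card_nsmul (Finset.range M) u δ
      fun n hn => (if_pos (Finset.mem_range.mp hn)).le
  have htail' : ∀ m ≥ M, tail u m ≤ 2 * ε * p.a m := fun m hm => by
    have heq : tail u m = 2 * tail (gaugeMax b) m := by
      rw [tail, tail, ← tsum_mul_left]
      exact tsum_congr fun k => hfar _ (hm.trans (Nat.le_add_left m k))
    rw [heq, mul_assoc]
    linarith [htail m hm]
  refine norm_le_of_fn_eq_haarSum p hu hbound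
    (tail_le_mul_of_sum_le p hu0 hu (by positivity) hhead htail') (funext fun x => ?_)
  exact (haarSum_sub hsum hsum (abs_le_gaugeMax_of_mem_coeffBox c.2)
    (abs_le_gaugeMax_of_mem_coeffBox c₀.2) x).symm

lemma continuous_brickMap (hhalf : ∀ᶠ n in atTop, p.a (n + 1) ≤ p.a n / 2)
    (hbpos : ∀ w, 0 < b w) (hadm : (fun n => gaugeMax b n) =o[atTop] p.a) {L : ℝ}
    (hsum : Summable (gaugeMax b)) (hL : ∀ m, tail (gaugeMax b) m ≤ L * p.a m) :
    Continuous (brickMap p hsum hL) := by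
  refine continuous_iff_continuousAt.mpr fun c₀ => Metric.tendsto_nhds.mpr fun ε hε => ?_
  have ha0 := p.pos 0
  set η := ε / (4 * (p.a 0 + 1))
  have hη : 0 < η := by positivity
  obtain ⟨M, hM⟩ := eventually_atTop.mp (eventually_tail_gaugeMax_le p hhalf hbpos hadm hη)
  have haM := p.pos M
  set δ := η * p.a M / (M + 1)
  have hδ : 0 < δ := by positivity
  have hMδ : M * δ / p.a M ≤ η := by
    rw [div_le_iff₀ haM, mul_div_assoc', div_le_iff₀ (by positivity)]
    nlinarith [mul_pos hη haM]
  have hclose : ∀ᶠ c in 𝓝 c₀, ∀ w ∈ {w : List Bool | w.length < M}, |c.1 w - c₀.1 w| < δ :=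
    (eventually_all_finite (List.finite_length_lt Bool M)).mpr fun w _ => by
      filter_upwards [((continuous_apply w).comp continuous_subtype_val).continuousAt.eventually
        (Metric.ball_mem_nhds (c₀.1 w) hδ)] with c hc
      exact hc
  filter_upwards [hclose] with c hc
  rw [dist_eq_norm]
  calc _ ≤ (M * δ / p.a M + 2 * η) * (p.a 0 + 1) :=
        norm_brickMap_sub_le p hbpos hsum hL hδ.le hη.le hM fun w hw => (hc w hw).le
    _ ≤ (η + 2 * η) * (p.a 0 + 1) := by gcongr
    _ < ε := by
        simp only [η]
        field_simp
        linarith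

end Brick

end HilbertBrick

open HilbertBrick in
theorem hilbert_brick_unique_and_compact_general (p : GoodSeq)
    (heva : (fun n => p.a (n + 1) / p.a n) =O[atTop]
      fun n => ((2 : ℝ) ^ (2 ^ (n + 2) : ℕ))⁻¹)
    (b : List Bool → ℝ) (hbpos : ∀ w, 0 < b w)
    (hadm₁ : (fun n => gaugeMax b n) =o[atTop] p.a) :
    (∀ c : List Bool → ℝ, (∀ w, |c w| ≤ b w) →
      ∃! f : Omega → ℝ, MemCa p.a f ∧
        ∀ x, HasSum (fun w : List Bool => c w * haar w x) (f x)) ∧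
    IsCompact {F : CaSpace p | ∃ c : List Bool → ℝ, (∀ w, |c w| ≤ b w) ∧
      ∀ x, HasSum (fun w : List Bool => c w * haar w x) (F.fn x)} := by
  have hhalf := eventually_le_half_of_isBigO p heva
  have hsum := summable_gaugeMax p hhalf hbpos hadm₁
  obtain ⟨L, hL⟩ := exists_tail_gaugeMax_le_mul p hhalf hbpos hadm₁
  refine ⟨fun c hc => ?_, ?_⟩
  · have hc' := abs_le_gaugeMax_of_mem_coeffBox hc
    refine ⟨haarSum c, ⟨memCa_haarSum p hsum hc' hL, hasSum_haarSum hsum hc'⟩, ?_⟩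
    exact fun f hf => funext fun x => (hf.2 x).unique (hasSum_haarSum hsum hc' x)
  · rw [setOf_hasSum_eq_range_brickMap p hsum hL]
    have := isCompact_iff_compactSpace.mp (isCompact_coeffBox b)
    exact isCompact_range (continuous_brickMap p hhalf hbpos hadm₁ hsum hL)

/-- **Hilbert bricks are well defined and compact.**  Suppose `a = (a_n)` is an
evanescent sequence (strictly decreasing, positive, `a_n → 0`, and
`a_{n+1}/a_n = O(2^{-2^{n+2}})`) and `b = (b_ω)` is an admissible gauge with respect to
`a` (positive, `b̄_n = o(a_n)`, `log(a_n/b̲_n) = O(n)`).  Then for any family of reals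
`(c_ω)` with `|c_ω| ≤ b_ω` for all `ω`, the Haar series `Σ_ω c_ω h_ω` converges and
represents a unique function of `C^a(Ω)`; moreover, the set `H_b` of all functions
obtained in this way is a compact subset of the Banach space `C^a(Ω)`. -/
theorem hilbert_brick_unique_and_compact (p : GoodSeq)
    (heva : (fun n => p.a (n + 1) / p.a n) =O[atTop]
      fun n => ((2 : ℝ) ^ (2 ^ (n + 2) : ℕ))⁻¹)
    (b : List Bool → ℝ) (hbpos : ∀ w, 0 < b w)
    (hadm₁ : (fun n => gaugeMax b n) =o[atTop] p.a)
    (hadm₂ : (fun n => Real.log (p.a n / gaugeMin b n)) =O[atTop] fun n => (n : ℝ)) :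
    (∀ c : List Bool → ℝ, (∀ w, |c w| ≤ b w) →
      ∃! f : Omega → ℝ, MemCa p.a f ∧
        ∀ x, HasSum (fun w : List Bool => c w * haar w x) (f x)) ∧
    IsCompact {F : CaSpace p | ∃ c : List Bool → ℝ, (∀ w, |c w| ≤ b w) ∧
      ∀ x, HasSum (fun w : List Bool => c w * haar w x) (F.fn x)} :=
  hilbert_brick_unique_and_compact_general p heva b hbpos hadm₁
end

section
/- Let (c_ω)_{ω∈Ω*} be a family of real numbers and set c̄_n = sup_{|ω|=n} |c_ω|. If Σ_n c̄_n < ∞, then for any constant c the Haar series c + Σ_{n=0}^∞ ( Σ_{|ω|=n} c_ω h_ω ) is normally convergent and defines a continuous function f : Ω → ℝ satisfying ‖f‖_∞ ≤ |c| + (1/2) Σ_n c̄_n and var_n(f) ≤ Σ_{k≥n} c̄_k for every n ∈ ℕ. -/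
/-!
At a point `x`, the only Haar function of length `n` that does not vanish is the one indexed by
the prefix `x₀ … x_{n-1}` of `x`, where it equals `±1/2`. So the Haar series at `x` collapses to
a series `∑ₙ gₙ(x)` with `|gₙ| ≤ c̄ₙ / 2`, and `gₙ` depends only on `x₀, …, xₙ`. The Weierstrass
M-test gives normal convergence, continuity and the sup bound; if `x` and `y` agree before `n`,
the terms `gₘ` with `m < n` cancel in `f x - f y` and each remaining one contributes at most `c̄ₘ`.
-/

open Set Filter

/-- `c̄_n = sup_{|ω|=n} |c_ω|`. -/
noncomputable def cbar (c : List Bool → ℝ) (n : ℕ) : ℝ :=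
  sSup {r | ∃ w : List Bool, w.length = n ∧ r = |c w|}

/-- The `n`-th variation of `f`. -/
noncomputable def varR (n : ℕ) (f : Omega → ℝ) : ℝ :=
  sSup {r | ∃ x y : Omega, (∀ i, i < n → x i = y i) ∧ r = |f x - f y|}

open Topology

lemma isLocallyConstant_of_forall_le_eq {α X : Type*} [TopologicalSpace α] [DiscreteTopology α]
    (n : ℕ) {f : (ℕ → α) → X} (hf : ∀ x y : ℕ → α, (∀ i ≤ n, x i = y i) → f x = f y) :
    IsLocallyConstant f := by
  refine (IsLocallyConstant.iff_eventually_eq f).2 fun x => ?_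
  have hcoord : ∀ i, ∀ᶠ y in 𝓝 x, y i = x i := fun i =>
    tendsto_pure.1 (by simpa only [nhds_discrete] using (continuous_apply i).tendsto x)
  filter_upwards [(eventually_all_finite (finite_Iic n)).2 fun i _ => hcoord i] with y hy
  exact hf y x hy

noncomputable def prefixWord (x : Omega) (n : ℕ) : List Bool :=
  List.ofFn fun i : Fin n => x i

@[simp] lemma prefixWord_length (x : Omega) (n : ℕ) : (prefixWord x n).length = n := by
  simp [prefixWord]

lemma prefixWord_injective (x : Omega) : Function.Injective (prefixWord x) := fun m n h => by
  simpa using congrArg List.length h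

lemma prefixWord_congr {x y : Omega} {n : ℕ} (h : ∀ i < n, x i = y i) :
    prefixWord x n = prefixWord y n :=
  List.ofFn_inj.2 <| funext fun i => h i i.2

lemma haar_eq_zero_of_ne_prefixWord {w : List Bool} {x : Omega} (h : w ≠ prefixWord x w.length) :
    haar w x = 0 := by
  refine if_neg fun hw => h (List.ext_get (by simp) fun i h₁ _ => ?_)
  simpa [prefixWord] using (hw ⟨i, h₁⟩).symm

lemma haar_prefixWord (x : Omega) (n : ℕ) :
    haar (prefixWord x n) x = if x n = false then 1 / 2 else -(1 / 2) := by
  rw [haar, if_pos, prefixWord_length]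
  intro i
  rw [List.get_eq_getElem]
  unfold prefixWord
  rw [List.getElem_ofFn]

lemma abs_haar_prefixWord (x : Omega) (n : ℕ) : |haar (prefixWord x n) x| = 1 / 2 := by
  rw [haar_prefixWord]; split_ifs <;> norm_num

lemma abs_le_cbar (c : List Bool → ℝ) {w : List Bool} : |c w| ≤ cbar c w.length := by
  have hfin : {r | ∃ v : List Bool, v.length = w.length ∧ r = |c v|}.Finite := by
    convert (List.finite_length_eq Bool w.length).image fun v => |c v| using 1
    ext r
    simp [eq_comm]
  exact le_csSup hfin.bddAbove ⟨w, rfl, rfl⟩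

lemma cbar_nonneg (c : List Bool → ℝ) (n : ℕ) : 0 ≤ cbar c n := by
  simpa using (abs_nonneg _).trans (abs_le_cbar c (w := List.replicate n false))

/-- The level-`n` block `∑_{|ω| = n} c_ω h_ω(x)` of the Haar series, reduced to its only
nonzero term. -/
noncomputable def haarTerm (c : List Bool → ℝ) (n : ℕ) (x : Omega) : ℝ :=
  c (prefixWord x n) * haar (prefixWord x n) x

section HaarTerm

variable (c : List Bool → ℝ)

lemma tsum_length_eq_haarTerm (n : ℕ) (x : Omega) :
    ∑' w : {w : List Bool // w.length = n}, c w * haar w x = haarTerm c n x := by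
  refine tsum_eq_single (⟨prefixWord x n, prefixWord_length x n⟩ : {w : List Bool // w.length = n})
    fun w hw => ?_
  have hne : w.1 ≠ prefixWord x w.1.length := fun h => hw (Subtype.ext (by rw [h, w.2]))
  rw [haar_eq_zero_of_ne_prefixWord hne, mul_zero]

lemma hasSum_haar_iff (x : Omega) {a : ℝ} :
    HasSum (fun w => c w * haar w x) a ↔ HasSum (fun n => haarTerm c n x) a := by
  refine ((prefixWord_injective x).hasSum_iff fun w (hw : w ∉ range (prefixWord x)) => ?_).symm
  have hne : w ≠ prefixWord x w.length := fun h => hw ⟨w.length, h.symm⟩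
  rw [haar_eq_zero_of_ne_prefixWord hne, mul_zero]

lemma abs_haarTerm_le (n : ℕ) (x : Omega) : |haarTerm c n x| ≤ cbar c n / 2 := by
  rw [haarTerm, abs_mul, abs_haar_prefixWord, ← div_eq_mul_one_div]
  simpa using div_le_div_of_nonneg_right (abs_le_cbar c (w := prefixWord x n)) zero_le_two

lemma haarTerm_congr {n : ℕ} {x y : Omega} (h : ∀ i ≤ n, x i = y i) :
    haarTerm c n x = haarTerm c n y := by
  rw [haarTerm, haarTerm, haar_prefixWord, haar_prefixWord, prefixWord_congr fun i hi => h i hi.le,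
    h n le_rfl]

lemma continuous_haarTerm (n : ℕ) : Continuous (haarTerm c n) :=
  (isLocallyConstant_of_forall_le_eq n fun _ _ => haarTerm_congr c).continuous

variable {c}

lemma summable_half_cbar (hc : Summable (cbar c)) : Summable fun n => cbar c n / 2 :=
  hc.div_const 2

lemma summable_haarTerm (hc : Summable (cbar c)) (x : Omega) : Summable fun n => haarTerm c n x :=
  (summable_half_cbar hc).of_norm_bounded (f := fun n => haarTerm c n x) fun n =>
    (Real.norm_eq_abs _).trans_le (abs_haarTerm_le c n x)

lemma continuous_tsum_haarTerm (hc : Summable (cbar c)) :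
    Continuous fun x => ∑' n, haarTerm c n x :=
  continuous_tsum (continuous_haarTerm c) (summable_half_cbar hc) fun n x => abs_haarTerm_le c n x

lemma abs_tsum_haarTerm_le (hc : Summable (cbar c)) (x : Omega) :
    |∑' n, haarTerm c n x| ≤ 1 / 2 * ∑' n, cbar c n := by
  rw [one_div_mul_eq_div, ← tsum_div_const, ← Real.norm_eq_abs]
  exact tsum_of_norm_bounded (summable_half_cbar hc).hasSum fun n =>
    (Real.norm_eq_abs _).trans_le (abs_haarTerm_le c n x)

lemma abs_tsum_haarTerm_sub_le (hc : Summable (cbar c)) {n : ℕ} {x y : Omega}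
    (h : ∀ i < n, x i = y i) :
    |∑' m, haarTerm c m x - ∑' m, haarTerm c m y| ≤ ∑' k, cbar c (n + k) := by
  have hd := (summable_haarTerm hc x).sub (summable_haarTerm hc y)
  have hhead : ∑ m ∈ Finset.range n, (haarTerm c m x - haarTerm c m y) = 0 :=
    Finset.sum_eq_zero fun m hm => sub_eq_zero.2 <|
      haarTerm_congr c fun i hi => h i (hi.trans_lt (Finset.mem_range.1 hm))
  rw [← (summable_haarTerm hc x).tsum_sub (summable_haarTerm hc y), ← hd.sum_add_tsum_nat_add n,
    hhead, zero_add]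
  simp_rw [add_comm n, ← Real.norm_eq_abs]
  refine tsum_of_norm_bounded ((summable_nat_add_iff (f := cbar c) n).2 hc).hasSum fun k => ?_
  calc ‖haarTerm c (k + n) x - haarTerm c (k + n) y‖
      ≤ |haarTerm c (k + n) x| + |haarTerm c (k + n) y| := abs_sub _ _
    _ ≤ cbar c (k + n) / 2 + cbar c (k + n) / 2 :=
        add_le_add (abs_haarTerm_le c _ x) (abs_haarTerm_le c _ y)
    _ = cbar c (k + n) := add_halves _

end HaarTerm

/-- **Convergence of Haar series.**  Let `(c_ω)_{ω ∈ Ω*}` be a family of reals and put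
`c̄_n = sup_{|ω|=n} |c_ω|`.  If `Σ_n c̄_n < ∞` then, for any constant `c`, the Haar
series `c + Σ_n (Σ_{|ω|=n} c_ω h_ω)` is normally convergent and defines a continuous
function `f : Ω → ℝ` with `‖f‖_∞ ≤ |c| + (1/2) Σ_n c̄_n` and
`var_n(f) ≤ Σ_{k ≥ n} c̄_k` for every `n`. -/
theorem haar_series_convergence (c : List Bool → ℝ) (κ : ℝ)
    (hsum : Summable (cbar c)) :
    ∃ f : Omega → ℝ, Continuous f ∧
      (∀ x, HasSum (fun w : List Bool => c w * haar w x) (f x - κ)) ∧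
      Summable (fun n : ℕ =>
        ⨆ x : Omega, |∑' w : {w : List Bool // w.length = n}, c w.1 * haar w.1 x|) ∧
      (⨆ x, |f x|) ≤ |κ| + (1 / 2) * ∑' n, cbar c n ∧
      ∀ n : ℕ, varR n f ≤ ∑' k : ℕ, cbar c (n + k) := by
  refine ⟨fun x => κ + ∑' n, haarTerm c n x, continuous_const.add (continuous_tsum_haarTerm hsum),
    fun x => ?_, ?_, ?_, fun n => ?_⟩
  · simpa only [add_sub_cancel_left, hasSum_haar_iff] using (summable_haarTerm hsum x).hasSum
  · refine (summable_half_cbar hsum).of_nonneg_of_le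
      (fun n => Real.iSup_nonneg fun _ => abs_nonneg _) fun n =>
      Real.iSup_le (fun x => ?_) (div_nonneg (cbar_nonneg c n) zero_le_two)
    rw [tsum_length_eq_haarTerm]
    exact abs_haarTerm_le c n x
  · have hbound_nonneg : 0 ≤ |κ| + 1 / 2 * ∑' n, cbar c n :=
      add_nonneg (abs_nonneg κ) (mul_nonneg one_half_pos.le (tsum_nonneg (cbar_nonneg c)))
    refine Real.iSup_le (fun x => ?_) hbound_nonneg
    exact (abs_add_le _ _).trans (add_le_add_right (abs_tsum_haarTerm_le hsum x) _)
  · refine Real.sSup_le ?_ (tsum_nonneg fun k => cbar_nonneg c _)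
    rintro r ⟨x, y, hxy, rfl⟩
    rw [add_sub_add_left_eq_sub]
    exact abs_tsum_haarTerm_sub_le hsum hxy
end

section
/- Let G be a finite directed graph. Every circulation on G is a convex combination of circulations supported on cycles of G. -/
open Set

/-- A circulation on the directed graph with node set `V` and arc set `A ⊆ V × V`:
nonnegative weights on arcs (zero outside `A`), total weight `1`, satisfying
Kirchhoff's current law at every node. -/
def IsCirculation {V : Type} [Fintype V] [DecidableEq V] (A : Finset (V × V))
    (c : V × V → ℝ) : Prop :=
  (∀ e, 0 ≤ c e) ∧ (∀ e, e ∉ A → c e = 0) ∧ (∑ e : V × V, c e = 1) ∧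
    ∀ v : V, (∑ u : V, c (u, v)) = ∑ u : V, c (v, u)

/-- `l` is a cycle of the graph `(V, A)`: a nonempty list of pairwise distinct nodes all
of whose consecutive (cyclically) pairs are arcs of `A`. -/
def IsCycle {V : Type} [Fintype V] [DecidableEq V] (A : Finset (V × V))
    (l : List V) : Prop :=
  l ≠ [] ∧ l.Nodup ∧ ∀ e ∈ l.zip (l.rotate 1), e ∈ A

/-- The circulation supported on a cycle: equal weight `1/ℓ` on each arc of the cycle. -/
noncomputable def cycleCirculation {V : Type} [DecidableEq V] (l : List V) :
    V × V → ℝ :=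
  fun e => if e ∈ l.zip (l.rotate 1) then (l.length : ℝ)⁻¹ else 0

/-!
Nonnegative conserved flows on the arcs of `A` form the cone spanned by the circulations of the
cycles of `A`. A nonzero flow contains a cycle of positive arcs: following positive arcs never gets
stuck, by conservation, so it eventually closes up. Subtracting the largest multiple of that
cycle's circulation lying below the flow leaves a flow with a strictly smaller support, and we
conclude by induction on the support. Since every cycle circulation has total weight `1`, an element
of that cone of total weight `1` is a convex combination of cycle circulations.
-/

open Finset Function

theorem mem_convexHull_of_mem_hull {R E : Type*} [Field R] [LinearOrder R] [IsStrictOrderedRing R]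
    [AddCommGroup E] [Module R E] {s : Set E} {x : E} (φ : E →ₗ[R] R) (hφs : ∀ y ∈ s, φ y = 1)
    (hx : x ∈ PointedCone.hull R s) (hφx : φ x = 1) : x ∈ convexHull R s := by
  obtain ⟨w, hws, hw, rfl⟩ := PointedCone.mem_hull_set.1 hx
  have hsum : ∑ y ∈ w.support, w y = 1 := by
    rw [← hφx, Finsupp.sum, map_sum]
    refine Finset.sum_congr rfl fun y hy => ?_
    rw [map_smul, hφs y (hws hy), smul_eq_mul, mul_one]
  have := w.support.centerMass_mem_convexHull (fun y _ => hw y) (hsum ▸ one_pos) (z := id) hws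
  rwa [Finset.centerMass, hsum, inv_one, one_smul] at this

theorem List.zip_rotate_one_map_range {α : Type*} (g : ℕ → α) {p : ℕ} (hg : g p = g 0) :
    ((List.range p).map g).zip (((List.range p).map g).rotate 1) =
      (List.range p).map fun k => (g k, g (k + 1)) := by
  refine List.ext_getElem (by simp) fun k hk _ => ?_
  have hkp : k < p := by simpa using hk
  suffices g ((k + 1) % p) = g (k + 1) by simpa [List.getElem_rotate]
  obtain hlt | heq : k + 1 < p ∨ k + 1 = p := by omega
  · rw [Nat.mod_eq_of_lt hlt]
  · rw [heq, Nat.mod_self, hg]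

theorem List.map_fst_zip_rotate_one {α : Type*} (l : List α) :
    (l.zip (l.rotate 1)).map Prod.fst = l :=
  List.map_fst_zip (by simp)

theorem List.map_snd_zip_rotate_one {α : Type*} (l : List α) :
    (l.zip (l.rotate 1)).map Prod.snd = l.rotate 1 :=
  List.map_snd_zip (by simp)

theorem List.Nodup.zip_rotate_one {α : Type*} {l : List α} (hl : l.Nodup) :
    (l.zip (l.rotate 1)).Nodup :=
  List.Nodup.of_map Prod.fst (by rwa [List.map_fst_zip_rotate_one])

theorem List.Nodup.card_filter_fst_eq_count {α β : Type*} [DecidableEq α] [DecidableEq β]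
    {Z : List (α × β)} (hZ : Z.Nodup) (v : α) :
    #{e ∈ Z.toFinset | e.1 = v} = (Z.map Prod.fst).count v := by
  rw [List.count_eq_countP, List.countP_map, List.countP_eq_length_filter,
    ← List.toFinset_card_of_nodup (hZ.filter _)]
  congr 1; ext; simp

theorem List.Nodup.card_filter_snd_eq_count {α β : Type*} [DecidableEq α] [DecidableEq β]
    {Z : List (α × β)} (hZ : Z.Nodup) (v : β) :
    #{e ∈ Z.toFinset | e.2 = v} = (Z.map Prod.snd).count v := by
  rw [List.count_eq_countP, List.countP_map, List.countP_eq_length_filter,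
    ← List.toFinset_card_of_nodup (hZ.filter _)]
  congr 1; ext; simp

theorem sum_filter_fst_eq {α β M : Type*} [Fintype α] [Fintype β] [DecidableEq α]
    [AddCommMonoid M] (f : α × β → M) (a : α) : ∑ e with e.1 = a, f e = ∑ b, f (a, b) := by
  rw [Finset.sum_filter, Fintype.sum_prod_type, Finset.sum_eq_single a] <;> simp +contextual

theorem sum_filter_snd_eq {α β M : Type*} [Fintype α] [Fintype β] [DecidableEq β]
    [AddCommMonoid M] (f : α × β → M) (b : β) : ∑ e with e.2 = b, f e = ∑ a, f (a, b) := by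
  rw [Finset.sum_filter, Fintype.sum_prod_type_right, Finset.sum_eq_single b] <;> simp +contextual

theorem card_filter_sub_ne_zero_lt {ι : Type*} [Fintype ι] {c d : ι → ℝ} (hd : 0 ≤ d)
    (hdc : d ≤ c) {i : ι} (hci : c i ≠ 0) (hdi : d i = c i) :
    #{j | c j - d j ≠ 0} < #{j | c j ≠ 0} := by
  refine Finset.card_lt_card ((Finset.ssubset_iff_of_subset fun j hj => ?_).2 ⟨i, ?_, ?_⟩)
  · simp only [mem_filter, Finset.mem_univ, true_and] at hj ⊢
    intro hcj
    exact hj (by linarith [show 0 ≤ d j from hd j, hdc j])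
  · simpa using hci
  · simp [hdi]

theorem Function.exists_iterate_mem_periodicPts {α : Type*} [Finite α] (f : α → α) (x : α) :
    ∃ n, f^[n] x ∈ periodicPts f := by
  obtain ⟨i, j, hij, h⟩ := Finite.exists_ne_map_eq_of_infinite fun n => f^[n] x
  wlog hlt : i < j generalizing i j
  · exact this j i hij.symm h.symm (hij.lt_or_gt.resolve_left hlt)
  refine ⟨i, j - i, Nat.sub_pos_of_lt hlt, ?_⟩
  rw [IsPeriodicPt, IsFixedPt, ← iterate_add_apply, Nat.sub_add_cancel hlt.le]
  exact h.symm

theorem Function.exists_list_periodicOrbit {α : Type*} {f : α → α} {x : α}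
    (hx : x ∈ periodicPts f) : ∃ l : List α, l ≠ [] ∧ l.Nodup ∧
      ∀ e ∈ l.zip (l.rotate 1), ∃ k, e = (f^[k] x, f^[k + 1] x) := by
  refine ⟨(List.range (minimalPeriod f x)).map (f^[·] x), ?_, ?_, ?_⟩
  · simpa [Nat.pos_iff_ne_zero] using minimalPeriod_pos_of_mem_periodicPts hx
  · exact List.nodup_range.map_on fun i hi j hj =>
      iterate_injOn_Iio_minimalPeriod (by simpa using hi) (by simpa using hj)
  · rw [List.zip_rotate_one_map_range _ (by simp [iterate_minimalPeriod])]
    simp only [List.mem_map]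
    rintro e ⟨k, -, rfl⟩
    exact ⟨k, rfl⟩

theorem exists_cycle_of_forall_exists_rel {α : Type*} [Finite α] (r : α → α → Prop)
    (hr : ∀ v, (∃ u, r u v) → ∃ w, r v w) {a b : α} (hab : r a b) :
    ∃ l : List α, l ≠ [] ∧ l.Nodup ∧ ∀ e ∈ l.zip (l.rotate 1), r e.1 e.2 := by
  choose! s hs using hr
  have hwalk : ∀ n, r (s^[n] b) (s^[n + 1] b) := by
    intro n
    induction n with
    | zero => exact hs b ⟨a, hab⟩
    | succ n ih => rw [iterate_succ_apply' s (n + 1)]; exact hs _ ⟨_, ih⟩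
  obtain ⟨n, hn⟩ := exists_iterate_mem_periodicPts s b
  obtain ⟨l, hne, hnd, hl⟩ := exists_list_periodicOrbit hn
  refine ⟨l, hne, hnd, fun e he => ?_⟩
  obtain ⟨k, rfl⟩ := hl e he
  simpa only [← iterate_add_apply, add_right_comm] using hwalk (k + n)

section Flows

variable {V : Type} [Fintype V]

structure IsFlow (A : Finset (V × V)) (c : V × V → ℝ) : Prop where
  nonneg : ∀ e, 0 ≤ c e
  eq_zero_of_notMem : ∀ e, e ∉ A → c e = 0
  conserved : ∀ v : V, ∑ u, c (u, v) = ∑ u, c (v, u)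

theorem IsCirculation.isFlow [DecidableEq V] {A : Finset (V × V)} {c : V × V → ℝ}
    (hc : IsCirculation A c) : IsFlow A c :=
  ⟨hc.1, hc.2.1, hc.2.2.2⟩

namespace IsFlow

variable {A : Finset (V × V)} {c d : V × V → ℝ}

theorem smul (hc : IsFlow A c) {t : ℝ} (ht : 0 ≤ t) : IsFlow A (t • c) where
  nonneg e := mul_nonneg ht (hc.nonneg e)
  eq_zero_of_notMem e he := by simp [hc.eq_zero_of_notMem e he]
  conserved v := by simp [← Finset.mul_sum, hc.conserved v]

theorem sub (hc : IsFlow A c) (hd : IsFlow A d) (hdc : d ≤ c) : IsFlow A (c - d) where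
  nonneg e := sub_nonneg.2 (hdc e)
  eq_zero_of_notMem e he := by simp [hc.eq_zero_of_notMem e he, hd.eq_zero_of_notMem e he]
  conserved v := by simp [Finset.sum_sub_distrib, hc.conserved v, hd.conserved v]

theorem exists_pos_out (hc : IsFlow A c) {u v : V} (huv : 0 < c (u, v)) : ∃ w, 0 < c (v, w) := by
  have hin : 0 < ∑ w, c (w, v) :=
    huv.trans_le (Finset.single_le_sum (fun w _ => hc.nonneg (w, v)) (Finset.mem_univ u))
  rw [hc.conserved v] at hin
  obtain ⟨w, -, hw⟩ :=
    Finset.exists_lt_of_sum_lt (f := 0) (g := fun w => c (v, w)) (by simpa using hin)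
  exact ⟨w, hw⟩

theorem exists_cycle [DecidableEq V] (hc : IsFlow A c) {e : V × V} (he : 0 < c e) :
    ∃ l, IsCycle A l ∧ ∀ e ∈ l.zip (l.rotate 1), 0 < c e := by
  obtain ⟨l, hne, hnd, hpos⟩ := exists_cycle_of_forall_exists_rel (fun u v => 0 < c (u, v))
    (fun v ⟨u, huv⟩ => hc.exists_pos_out huv) he
  refine ⟨l, ⟨hne, hnd, fun e he => ?_⟩, hpos⟩
  by_contra hA
  exact (hpos e he).ne' (hc.eq_zero_of_notMem e hA)

end IsFlow

end Flows

section CycleCirculation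

variable {V : Type} [DecidableEq V] {l : List V}

theorem sum_cycleCirculation_eq_card (s : Finset (V × V)) :
    ∑ e ∈ s, cycleCirculation l e = #{e ∈ (l.zip (l.rotate 1)).toFinset | e ∈ s} / l.length := by
  unfold cycleCirculation
  rw [← Finset.sum_filter, sum_const, nsmul_eq_mul, div_eq_mul_inv]
  congr 3
  ext e
  simp [and_comm]

variable [Fintype V]

theorem sum_cycleCirculation (hne : l ≠ []) (hl : l.Nodup) : ∑ e, cycleCirculation l e = 1 := by
  rw [sum_cycleCirculation_eq_card, Finset.filter_true_of_mem fun _ _ => Finset.mem_univ _,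
    List.toFinset_card_of_nodup hl.zip_rotate_one]
  simp [hne]

theorem sum_cycleCirculation_out (hl : l.Nodup) (v : V) :
    ∑ u, cycleCirculation l (v, u) = l.count v / l.length := by
  rw [← sum_filter_fst_eq, sum_cycleCirculation_eq_card]
  simp only [mem_filter, Finset.mem_univ, true_and]
  rw [hl.zip_rotate_one.card_filter_fst_eq_count, List.map_fst_zip_rotate_one]

theorem sum_cycleCirculation_in (hl : l.Nodup) (v : V) :
    ∑ u, cycleCirculation l (u, v) = l.count v / l.length := by
  rw [← sum_filter_snd_eq, sum_cycleCirculation_eq_card]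
  simp only [mem_filter, Finset.mem_univ, true_and]
  rw [hl.zip_rotate_one.card_filter_snd_eq_count, List.map_snd_zip_rotate_one,
    (List.rotate_perm l 1).count_eq]

theorem isFlow_cycleCirculation {A : Finset (V × V)} (hl : IsCycle A l) :
    IsFlow A (cycleCirculation l) where
  nonneg e := by unfold cycleCirculation; split_ifs <;> positivity
  eq_zero_of_notMem e he := if_neg fun hmem => he (hl.2.2 e hmem)
  conserved v := by rw [sum_cycleCirculation_in hl.2.1, sum_cycleCirculation_out hl.2.1]

end CycleCirculation

section Decomposition

variable {V : Type} [Fintype V] [DecidableEq V] {A : Finset (V × V)} {c : V × V → ℝ}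

def cycleCirculations (A : Finset (V × V)) : Set (V × V → ℝ) :=
  {d | ∃ l : List V, IsCycle A l ∧ d = cycleCirculation l}

theorem IsFlow.exists_smul_cycleCirculation_le (hc : IsFlow A c) {e : V × V} (he : 0 < c e) :
    ∃ l, IsCycle A l ∧ ∃ t : ℝ, 0 ≤ t ∧ t • cycleCirculation l ≤ c ∧
      ∃ e, c e ≠ 0 ∧ (t • cycleCirculation l) e = c e := by
  obtain ⟨l, hl, hpos⟩ := hc.exists_cycle he
  have hZ : (l.zip (l.rotate 1)).toFinset.Nonempty := by
    simpa [List.toFinset_nonempty_iff, ← List.length_pos_iff] using hl.1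
  obtain ⟨e₀, he₀, hmin⟩ := (l.zip (l.rotate 1)).toFinset.exists_min_image c hZ
  rw [List.mem_toFinset] at he₀
  have hlen : (l.length : ℝ) ≠ 0 := by simpa using hl.1
  have hcyc : ∀ e ∈ l.zip (l.rotate 1), l.length * c e₀ * cycleCirculation l e = c e₀ := by
    intro e he
    rw [cycleCirculation, if_pos he]
    field_simp
  refine ⟨l, hl, l.length * c e₀, by positivity [(hpos e₀ he₀).le], fun e => ?_,
    e₀, (hpos e₀ he₀).ne', hcyc e₀ he₀⟩
  by_cases he : e ∈ l.zip (l.rotate 1)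
  · simpa [hcyc e he] using hmin e (List.mem_toFinset.2 he)
  · simpa [cycleCirculation, if_neg he] using hc.nonneg e

theorem IsFlow.mem_hull_cycleCirculations (hc : IsFlow A c) :
    c ∈ PointedCone.hull ℝ (cycleCirculations A) := by
  induction hn : #{e | c e ≠ 0} using Nat.strong_induction_on generalizing c with
  | _ n ih =>
  obtain rfl | ⟨e, he⟩ : c = 0 ∨ ∃ e, 0 < c e := by
    refine or_iff_not_imp_right.2 fun h => funext fun e => ?_
    push Not at h
    exact le_antisymm (h e) (hc.nonneg e)
  · exact zero_mem _
  obtain ⟨l, hl, t, ht, hle, e, hce, hte⟩ := hc.exists_smul_cycleCirculation_le he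
  have hd := (isFlow_cycleCirculation hl).smul ht
  have hsub := ih _ (hn ▸ card_filter_sub_ne_zero_lt hd.nonneg hle hce hte) (hc.sub hd hle) rfl
  rw [← sub_add_cancel c (t • cycleCirculation l)]
  exact add_mem hsub (PointedCone.smul_mem _ ht (PointedCone.subset_hull ⟨l, hl, rfl⟩))

end Decomposition

/-- **Every circulation is a convex combination of circulations supported on cycles.** -/
theorem circulation_mem_convexHull_cycles (V : Type) [Fintype V] [DecidableEq V]
    (A : Finset (V × V)) (c : V × V → ℝ) (hc : IsCirculation A c) :
    c ∈ convexHull ℝ {d : V × V → ℝ | ∃ l : List V, IsCycle A l ∧ d = cycleCirculation l} := by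
  refine mem_convexHull_of_mem_hull (∑ e, LinearMap.proj e) ?_ hc.isFlow.mem_hull_cycleCirculations
    (by simpa using hc.2.2.1)
  rintro _ ⟨l, hl, rfl⟩
  simpa using sum_cycleCirculation hl.1 hl.2.1
end

section
/- For every integer n ≥ 1, the rotation set R_n = π_n(M_σ) ⊆ ℝ^{2^n} equals (under the natural identification of coordinates indexed by level-n cylinders with arcs of G_n) the circulation polytope of the de Bruijn graph G_n. Moreover R_n has the injectivity property: the restriction of π_n to the set C_n is a bijection onto the set of vertices of R_n. -/
open Filter Set MeasureTheory
open scoped ENNReal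

/-- The cylinder determined by a word of length `n` (as a function `Fin n → Bool`). -/
def cylF {n : ℕ} (w : Fin n → Bool) : Set Omega := {x | ∀ i : Fin n, x i = w i}

/-- The cylinder determined by a finite word (as a list). -/
def cylL (w : List Bool) : Set Omega := {x | ∀ i : Fin w.length, x (i : ℕ) = w.get i}

/-- A shift-invariant Borel probability measure on `Ω`. -/
def InvariantProb (μ : Measure Omega) : Prop :=
  IsProbabilityMeasure μ ∧ ∀ s : Set Omega, MeasurableSet s → μ (shift ⁻¹' s) = μ s

/-- `μ` is a maximizing measure for `f`. -/
def IsMaxMeasure (f : Omega → ℝ) (μ : Measure Omega) : Prop :=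
  InvariantProb μ ∧ ∀ ν : Measure Omega, InvariantProb ν → ∫ x, f x ∂ν ≤ ∫ x, f x ∂μ

/-- The uniform measure on the orbit segment `x, σx, …, σ^{p-1}x`. -/
noncomputable def orbitMeasure (x : Omega) (p : ℕ) : Measure Omega :=
  (p : ℝ≥0∞)⁻¹ • ∑ j ∈ Finset.range p, MeasureTheory.Measure.dirac (shift^[j] x)

/-- A periodic measure: an invariant measure supported on a periodic orbit. -/
def IsPeriodicMeasure (μ : Measure Omega) : Prop :=
  ∃ (x : Omega) (p : ℕ), 0 < p ∧ shift^[p] x = x ∧ μ = orbitMeasure x p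

/-- The period of (the orbit supporting) a periodic measure. -/
noncomputable def perM (μ : Measure Omega) : ℕ :=
  sInf {p | 0 < p ∧ ∃ x, shift^[p] x = x ∧ μ = orbitMeasure x p}

/-- The (topological) support of a measure. -/
def msupp (μ : Measure Omega) : Set Omega :=
  {x | ∀ U : Set Omega, IsOpen U → x ∈ U → 0 < μ U}

/-- `B_{μ,k}`: the union of all cylinders of level `k` meeting the support of `μ`. -/
def Bbasin (μ : Measure Omega) (k : ℕ) : Set Omega :=
  {x | ∃ y ∈ msupp μ, ∀ i, i < k → x i = y i}

/-- Membership in `𝒞_n`: periodic measures whose `G_n`-itinerary is a cycle, i.e. each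
cylinder of level `n-1` contains at most one point of the support. -/
def MemCn (n : ℕ) (μ : Measure Omega) : Prop :=
  IsPeriodicMeasure μ ∧
    ∀ x ∈ msupp μ, ∀ y ∈ msupp μ, (∀ k, k + 1 < n → x k = y k) → x = y

/-- The projection `π_n : M(Ω) → ℝ^{2^n}`, `μ ↦ (μ[ω])_{|ω|=n}`. -/
noncomputable def piProj (n : ℕ) (μ : MeasureTheory.Measure Omega) : (Fin n → Bool) → ℝ :=
  fun w => (μ (cylF w)).toReal

/-- The rotation set `R_n = π_n(M_σ)`. -/
def rotSet (n : ℕ) : Set ((Fin n → Bool) → ℝ) :=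
  {c | ∃ μ : MeasureTheory.Measure Omega, InvariantProb μ ∧ c = piProj n μ}

/-!
Invariance of `μ` under the shift is exactly Kirchhoff's law for the weights `μ[ω]` of the arcs
of `G_n`, so `R_n` lies in the circulation polytope. Conversely, Kirchhoff's law lets a walk
along arcs of positive weight of a circulation `c` go on forever, so it closes up into a simple
cycle of `G_n`. A simple cycle is the itinerary of a periodic point whose periodic measure
projects to the uniform circulation `γ` on the cycle. Removing from `c` the largest multiple of
`γ` lying below it kills an arc, so by induction on the support `c` is a convex combination of
such `γ`'s, hence lies in the convex set `R_n`.

A circulation supported on a simple cycle is constant along it, hence equal to `γ`: so these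
`γ` are extreme points, and the decomposition above shows there are no others. Finally, `γ`
determines its cycle up to rotation, since each arc of the support is followed by a unique one;
hence it determines the periodic measure.
-/

namespace RotationSet

open Function

variable {n m p : ℕ} {x : Omega}

lemma iterate_shift_apply (x : Omega) (k i : ℕ) : shift^[k] x i = x (i + k) := by
  induction k generalizing x with
  | zero => rfl
  | succ k ih => rw [iterate_succ_apply, ih]; rfl

lemma measurableSet_cylF (w : Fin n → Bool) : MeasurableSet (cylF w) := by
  simp only [cylF, Set.ofPred_forall]
  exact .iInter fun i => measurableSet_eq_fun (measurable_pi_apply _) measurable_const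

lemma disjoint_cylF {w w' : Fin n → Bool} (h : w ≠ w') : Disjoint (cylF w) (cylF w') :=
  Set.disjoint_left.2 fun _ hx hx' => h (funext fun i => (hx i).symm.trans (hx' i))

lemma iUnion_cylF : ⋃ w : Fin n → Bool, cylF w = Set.univ :=
  Set.eq_univ_of_forall fun x => Set.mem_iUnion.2 ⟨fun i => x i, fun _ => rfl⟩

lemma mem_cylF_cons {b : Bool} {u : Fin m → Bool} :
    x ∈ cylF (Fin.cons b u) ↔ x 0 = b ∧ shift x ∈ cylF u := by
  simp only [cylF, Set.mem_ofPred_eq, Fin.forall_fin_succ, Fin.cons_zero, Fin.cons_succ,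
    Fin.val_zero, Fin.val_succ, shift]

lemma mem_cylF_snoc {b : Bool} {u : Fin m → Bool} :
    x ∈ cylF (Fin.snoc u b) ↔ x ∈ cylF u ∧ x m = b := by
  simp only [cylF, Set.mem_ofPred_eq, Fin.forall_fin_succ', Fin.snoc_castSucc, Fin.snoc_last,
    Fin.val_last, Fin.val_castSucc]

lemma preimage_shift_cylF (u : Fin m → Bool) :
    shift ⁻¹' cylF u = ⋃ b, cylF (Fin.cons b u) := by
  ext x; simp [mem_cylF_cons]

lemma cylF_eq_iUnion_snoc (u : Fin m → Bool) : cylF u = ⋃ b, cylF (Fin.snoc u b) := by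
  ext x; simp [mem_cylF_snoc]

lemma measure_iUnion_cylF {ι : Type*} [Fintype ι] (μ : Measure Omega) {f : ι → Fin n → Bool}
    (hf : Injective f) : μ (⋃ i, cylF (f i)) = ∑ i, μ (cylF (f i)) := by
  rw [measure_iUnion (fun i j hij => disjoint_cylF (hf.ne hij)) fun i => measurableSet_cylF _,
    tsum_fintype]

lemma sum_piProj_comp {ι : Type*} [Fintype ι] (μ : Measure Omega) [IsFiniteMeasure μ]
    {f : ι → Fin n → Bool} (hf : Injective f) :
    ∑ i, piProj n μ (f i) = (μ (⋃ i, cylF (f i))).toReal := by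
  rw [measure_iUnion_cylF μ hf, ENNReal.toReal_sum fun i _ => measure_ne_top μ _]
  rfl

/-- The node (`n = m`) or arc (`n = m + 1`) of `G_{m+1}` visited at time `k` by the itinerary
of `x`. -/
def window (n k : ℕ) (x : Omega) : Fin n → Bool := fun i => x (i + k)

lemma iterate_shift_mem_cylF_iff {k : ℕ} {w : Fin n → Bool} :
    shift^[k] x ∈ cylF w ↔ window n k x = w := by
  simp only [cylF, Set.mem_ofPred_eq, iterate_shift_apply, funext_iff, window, eq_comm]

lemma window_iterate_shift (x : Omega) (j k : ℕ) :
    window n k (shift^[j] x) = window n (j + k) x := by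
  funext i; simp only [window, iterate_shift_apply]; congr 1; ring

lemma init_window (x : Omega) (k : ℕ) : Fin.init (window (m + 1) k x) = window m k x := rfl

lemma tail_window (x : Omega) (k : ℕ) : Fin.tail (window (m + 1) k x) = window m (k + 1) x := by
  funext i; simp only [Fin.tail, window, Fin.val_succ]; congr 1; ring

lemma window_mod (hx : IsPeriodicPt shift p x) (k : ℕ) :
    window n (k % p) x = window n k x := by
  have hper : Periodic (fun k => window n k x) p := fun k => by
    simp only [add_comm k, ← window_iterate_shift, hx.eq]
  exact hper.map_mod_nat k

variable {c γ : (Fin (m + 1) → Bool) → ℝ}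

/-- Coordinates are indexed by the arcs of `G_{m+1}`: `Fin.cons b u` enters the node `u` and
`Fin.snoc u b` leaves it. -/
def circulations (m : ℕ) : Set ((Fin (m + 1) → Bool) → ℝ) :=
  {c | (∀ w, 0 ≤ c w) ∧ (∑ w, c w = 1) ∧
    ∀ u : Fin m → Bool, (∑ b : Bool, c (Fin.cons b u)) = ∑ b : Bool, c (Fin.snoc u b)}

lemma rotSet_subset_circulations : rotSet (m + 1) ⊆ circulations m := by
  rintro _ ⟨μ, ⟨hμ, hinv⟩, rfl⟩
  refine ⟨fun w => ENNReal.toReal_nonneg, ?_, fun u => ?_⟩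
  · simpa [iUnion_cylF] using sum_piProj_comp μ (f := id) injective_id
  · rw [sum_piProj_comp μ (Fin.cons_left_injective u),
      sum_piProj_comp μ (Fin.snoc_injective2.right u), ← preimage_shift_cylF,
      ← cylF_eq_iUnion_snoc, hinv _ (measurableSet_cylF u)]

lemma convex_rotSet (n : ℕ) : Convex ℝ (rotSet n) := by
  rintro _ ⟨μ, ⟨hμ, hμinv⟩, rfl⟩ _ ⟨ν, ⟨hν, hνinv⟩, rfl⟩ a b ha hb hab
  refine ⟨ENNReal.ofReal a • μ + ENNReal.ofReal b • ν, ⟨⟨?_⟩, fun s hs => ?_⟩, ?_⟩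
  · simp [← ENNReal.ofReal_add ha hb, hab]
  · simp [hμinv s hs, hνinv s hs]
  · funext w
    simp only [piProj, Pi.add_apply, Pi.smul_apply, smul_eq_mul, Measure.add_apply,
      Measure.smul_apply]
    rw [ENNReal.toReal_add (by finiteness) (by finiteness), ENNReal.toReal_mul,
      ENNReal.toReal_mul, ENNReal.toReal_ofReal ha, ENNReal.toReal_ofReal hb]

lemma eq_of_le_of_mem_circulations (hc : c ∈ circulations m) (hγ : γ ∈ circulations m)
    (hle : γ ≤ c) : γ = c := by
  have hzero := (Finset.sum_eq_zero_iff_of_nonneg fun w _ => sub_nonneg.2 (hle w)).1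
    (by rw [Finset.sum_sub_distrib, hc.2.1, hγ.2.1, sub_self])
  exact funext fun w => (sub_eq_zero.1 (hzero w (Finset.mem_univ w))).symm

lemma inv_smul_sub_smul_mem_circulations (hc : c ∈ circulations m) (hγ : γ ∈ circulations m)
    {ε : ℝ} (hε : ε < 1) (hle : ε • γ ≤ c) :
    (1 - ε)⁻¹ • (c - ε • γ) ∈ circulations m := by
  simp only [circulations, Set.mem_ofPred_eq, Pi.smul_apply, Pi.sub_apply, smul_eq_mul,
    ← Finset.mul_sum, Finset.sum_sub_distrib]
  refine ⟨fun w => mul_nonneg (inv_nonneg.2 (by linarith)) (sub_nonneg.2 (hle w)), ?_,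
    fun u => by rw [hc.2.2 u, hγ.2.2 u]⟩
  rw [hc.2.1, hγ.2.1, mul_one, inv_mul_cancel₀ (by linarith)]

lemma support_inv_smul_sub_smul_ssubset {α : Type*} {f g : α → ℝ} {ε : ℝ}
    (hg : support g ⊆ support f) {a : α} (ha : f a ≠ 0) (hεa : ε * g a = f a) :
    support ((1 - ε)⁻¹ • (f - ε • g)) ⊂ support f := by
  refine (Set.ssubset_iff_of_subset fun b hb => ?_).2 ⟨a, ha, by simp [hεa]⟩
  by_contra hfb
  have hgb : g b = 0 := not_not.1 (mt (@hg b) hfb)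
  exact hb (by simp [not_not.1 hfb, hgb])

lemma _root_.Function.Periodic.sum_range_mul {M : Type*} [AddCommMonoid M] {f : ℕ → M} {q : ℕ}
    (hf : Periodic f q) (k : ℕ) :
    ∑ j ∈ Finset.range (q * k), f j = k • ∑ j ∈ Finset.range q, f j := by
  induction k with
  | zero => simp
  | succ k ih =>
    rw [mul_add_one, Finset.sum_range_add, ih, succ_nsmul]
    congr 1
    exact Finset.sum_congr rfl fun j _ => by rw [add_comm, mul_comm]; exact hf.nat_mul k j

section OrbitMeasure

open scoped Classical

lemma orbitMeasure_apply (x : Omega) (p : ℕ) (s : Set Omega) :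
    orbitMeasure x p s =
      (p : ℝ≥0∞)⁻¹ * ((Finset.range p).filter (shift^[·] x ∈ s)).card := by
  simp [orbitMeasure, Measure.dirac_apply, Set.indicator_apply, Finset.sum_boole]

lemma isProbabilityMeasure_orbitMeasure (x : Omega) (hp : 0 < p) :
    IsProbabilityMeasure (orbitMeasure x p) :=
  ⟨by simp [orbitMeasure_apply, ENNReal.inv_mul_cancel, hp.ne']⟩

lemma orbitMeasure_preimage_shift (x : Omega) (p : ℕ) (s : Set Omega) :
    orbitMeasure x p (shift ⁻¹' s) = orbitMeasure (shift x) p s := by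
  simp only [orbitMeasure_apply, Set.mem_preimage, ← iterate_succ_apply' shift,
    iterate_succ_apply]

lemma orbitMeasure_shift (hx : IsPeriodicPt shift p x) :
    orbitMeasure (shift x) p = orbitMeasure x p := by
  cases p with
  | zero => rfl
  | succ k =>
    simp only [orbitMeasure, ← iterate_succ_apply shift]
    rw [Finset.sum_range_succ (fun j => Measure.dirac (shift^[j + 1] x)),
      Finset.sum_range_succ' (fun j => Measure.dirac (shift^[j] x)), hx.eq, iterate_zero_apply]

lemma invariantProb_orbitMeasure (hp : 0 < p) (hx : IsPeriodicPt shift p x) :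
    InvariantProb (orbitMeasure x p) :=
  ⟨isProbabilityMeasure_orbitMeasure x hp, fun s _ => by
    rw [orbitMeasure_preimage_shift, orbitMeasure_shift hx]⟩

lemma orbitMeasure_iterate_shift (hx : IsPeriodicPt shift p x) (j : ℕ) :
    orbitMeasure (shift^[j] x) p = orbitMeasure x p := by
  induction j with
  | zero => rfl
  | succ j ih => rw [iterate_succ_apply', orbitMeasure_shift (hx.apply_iterate j), ih]

lemma orbitMeasure_minimalPeriod (hp : 0 < p) (hx : IsPeriodicPt shift p x) :
    orbitMeasure x p = orbitMeasure x (minimalPeriod shift x) := by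
  obtain ⟨k, rfl⟩ := hx.minimalPeriod_dvd
  have hk : k ≠ 0 := by rintro rfl; simp at hp
  have hper : Periodic (fun j => Measure.dirac (shift^[j] x)) (minimalPeriod shift x) := fun j => by
    simp only [iterate_add_apply, (isPeriodicPt_minimalPeriod shift x).eq]
  rw [orbitMeasure, orbitMeasure, hper.sum_range_mul, ← Nat.cast_smul_eq_nsmul ℝ≥0∞, smul_smul,
    Nat.cast_mul, ENNReal.mul_inv (by simp) (by simp), mul_assoc,
    ENNReal.inv_mul_cancel (by simpa) (by simp), mul_one]

lemma msupp_orbitMeasure (x : Omega) (p : ℕ) :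
    msupp (orbitMeasure x p) = (shift^[·] x) '' Set.Iio p := by
  ext y
  refine ⟨fun hy => ?_, ?_⟩
  · by_contra hyO
    have hO : IsOpen ((shift^[·] x) '' Set.Iio p)ᶜ :=
      ((Set.finite_Iio p).image _).isClosed.isOpen_compl
    have := hy _ hO hyO
    simp only [orbitMeasure_apply, CanonicallyOrderedAdd.mul_pos, ENNReal.inv_pos, Nat.cast_pos,
      Finset.card_pos] at this
    obtain ⟨j, hj⟩ := this.2
    simp only [Finset.mem_filter, Finset.mem_range] at hj
    exact hj.2 ⟨j, hj.1, rfl⟩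
  · rintro ⟨j, hj, rfl⟩ U - hjU
    rw [orbitMeasure_apply]
    refine ENNReal.mul_pos (by simp) ?_
    simpa using ⟨j, Set.mem_Iio.1 hj, hjU⟩

lemma piProj_orbitMeasure (x : Omega) (p n : ℕ) (w : Fin n → Bool) :
    piProj n (orbitMeasure x p) w =
      (p : ℝ)⁻¹ * ((Finset.range p).filter (window n · x = w)).card := by
  simp [piProj, orbitMeasure_apply, iterate_shift_mem_cylF_iff]

lemma piProj_orbitMeasure_mem_rotSet {n : ℕ} (hp : 0 < p) (hx : IsPeriodicPt shift p x) :
    piProj n (orbitMeasure x p) ∈ rotSet n :=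
  ⟨_, invariantProb_orbitMeasure hp hx, rfl⟩

lemma piProj_orbitMeasure_eq_zero {w : Fin n → Bool} (hw : w ∉ Set.range (window n · x)) :
    piProj n (orbitMeasure x p) w = 0 := by
  rw [piProj_orbitMeasure, Finset.filter_false_of_mem fun j _ hj => hw ⟨j, hj⟩]
  simp

end OrbitMeasure

/-- The `G_{m+1}`-itinerary of `x` is a cycle of length `p`: its nodes, the windows of length
`m`, do not repeat within a period. -/
structure IsSimpleCycle (m p : ℕ) (x : Omega) : Prop where
  pos : 0 < p
  isPeriodicPt : IsPeriodicPt shift p x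
  injOn_window : Set.InjOn (window m · x) (Set.Iio p)

namespace IsSimpleCycle

lemma window_eq_window_iff (hx : IsSimpleCycle m p x) {n : ℕ} (hn : m ≤ n) {i j : ℕ} :
    window n i x = window n j x ↔ i % p = j % p := by
  refine ⟨fun h => hx.injOn_window (Nat.mod_lt _ hx.pos) (Nat.mod_lt _ hx.pos) ?_, fun h => ?_⟩
  · simp only [window_mod hx.isPeriodicPt]
    exact funext fun l => congrFun h (Fin.castLE hn l)
  · rw [← window_mod hx.isPeriodicPt, h, window_mod hx.isPeriodicPt]

lemma eq_of_init_eq (hx : IsSimpleCycle m p x) {w : Fin (m + 1) → Bool}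
    (hw : w ∈ Set.range (window (m + 1) · x)) {j : ℕ} (h : Fin.init w = window m j x) :
    w = window (m + 1) j x := by
  obtain ⟨s, rfl⟩ := hw
  rw [init_window, hx.window_eq_window_iff le_rfl] at h
  exact (hx.window_eq_window_iff m.le_succ).2 h

lemma eq_of_tail_eq (hx : IsSimpleCycle m p x) {w : Fin (m + 1) → Bool}
    (hw : w ∈ Set.range (window (m + 1) · x)) {j : ℕ} (h : Fin.tail w = window m (j + 1) x) :
    w = window (m + 1) j x := by
  obtain ⟨s, rfl⟩ := hw
  rw [tail_window, hx.window_eq_window_iff le_rfl] at h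
  exact (hx.window_eq_window_iff m.le_succ).2 (Nat.ModEq.add_right_cancel' 1 h)

lemma piProj_window (hx : IsSimpleCycle m p x) (j : ℕ) :
    piProj (m + 1) (orbitMeasure x p) (window (m + 1) j x) = (p : ℝ)⁻¹ := by
  have hfilter : (Finset.range p).filter (window (m + 1) · x = window (m + 1) j x) = {j % p} := by
    ext k
    simp only [Finset.mem_filter, Finset.mem_range, Finset.mem_singleton,
      hx.window_eq_window_iff m.le_succ]
    constructor
    · rintro ⟨hk, h⟩
      rwa [Nat.mod_eq_of_lt hk] at h
    · rintro rfl
      exact ⟨Nat.mod_lt _ hx.pos, Nat.mod_mod _ _⟩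
  rw [piProj_orbitMeasure, hfilter, Finset.card_singleton, Nat.cast_one, mul_one]

lemma piProj_mem_circulations (hx : IsSimpleCycle m p x) :
    piProj (m + 1) (orbitMeasure x p) ∈ circulations m :=
  rotSet_subset_circulations (piProj_orbitMeasure_mem_rotSet hx.pos hx.isPeriodicPt)

lemma sum_cons_eq (hx : IsSimpleCycle m p x)
    (hsupp : ∀ w, c w ≠ 0 → w ∈ Set.range (window (m + 1) · x)) (j : ℕ) :
    ∑ b, c (Fin.cons b (window m (j + 1) x)) = c (window (m + 1) j x) := by
  rw [← tail_window, Fintype.sum_eq_single (window (m + 1) j x 0), Fin.cons_self_tail]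
  intro b hb
  by_contra hcb
  have harc := hx.eq_of_tail_eq (hsupp _ hcb) (by rw [Fin.tail_cons, tail_window])
  exact hb (by simpa using congrFun harc 0)

lemma sum_snoc_eq (hx : IsSimpleCycle m p x)
    (hsupp : ∀ w, c w ≠ 0 → w ∈ Set.range (window (m + 1) · x)) (j : ℕ) :
    ∑ b, c (Fin.snoc (window m j x) b) = c (window (m + 1) j x) := by
  rw [← init_window, Fintype.sum_eq_single (window (m + 1) j x (Fin.last m)), Fin.snoc_init_self]
  intro b hb
  by_contra hcb
  have harc := hx.eq_of_init_eq (hsupp _ hcb) (by rw [Fin.init_snoc, init_window])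
  exact hb (by simpa using congrFun harc (Fin.last m))

/-- Kirchhoff's law at the node `window m (j + 1) x`, which the cycle enters and leaves once. -/
lemma apply_window_succ (hx : IsSimpleCycle m p x) (hc : c ∈ circulations m)
    (hsupp : ∀ w, c w ≠ 0 → w ∈ Set.range (window (m + 1) · x)) (j : ℕ) :
    c (window (m + 1) (j + 1) x) = c (window (m + 1) j x) := by
  rw [← hx.sum_cons_eq hsupp j, hc.2.2, hx.sum_snoc_eq hsupp (j + 1)]

lemma eq_piProj_of_support_subset (hx : IsSimpleCycle m p x) (hc : c ∈ circulations m)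
    (hsupp : ∀ w, c w ≠ 0 → w ∈ Set.range (window (m + 1) · x)) :
    c = piProj (m + 1) (orbitMeasure x p) := by
  have hconst (j : ℕ) : c (window (m + 1) j x) = c (window (m + 1) 0 x) := by
    induction j with
    | zero => rfl
    | succ j ih => rw [hx.apply_window_succ hc hsupp, ih]
  have hp : (p : ℝ) ≠ 0 := Nat.cast_ne_zero.2 hx.pos.ne'
  have hsmul : c = (p * c (window (m + 1) 0 x)) • piProj (m + 1) (orbitMeasure x p) := by
    funext w
    by_cases hw : w ∈ Set.range (window (m + 1) · x)
    · obtain ⟨j, rfl⟩ := hw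
      dsimp only
      rw [Pi.smul_apply, hx.piProj_window, hconst, smul_eq_mul, mul_right_comm,
        mul_inv_cancel₀ hp, one_mul]
    · rw [Pi.smul_apply, piProj_orbitMeasure_eq_zero hw, smul_zero]
      exact not_not.1 (mt (hsupp w) hw)
  have hscale : (p : ℝ) * c (window (m + 1) 0 x) = 1 := by
    have hsum := hc.2.1
    rw [hsmul] at hsum
    simpa only [Pi.smul_apply, smul_eq_mul, ← Finset.mul_sum, hx.piProj_mem_circulations.2.1,
      mul_one] using hsum
  rw [hsmul, hscale, one_smul]

lemma piProj_mem_extremePoints (hx : IsSimpleCycle m p x) :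
    piProj (m + 1) (orbitMeasure x p) ∈ Set.extremePoints ℝ (circulations m) := by
  refine ⟨hx.piProj_mem_circulations, fun c₁ hc₁ c₂ hc₂ ⟨a, b, ha, hb, _, hab⟩ => ?_⟩
  refine hx.eq_piProj_of_support_subset hc₁ fun w hw => by_contra fun hw' => hw ?_
  have h := congrFun hab w
  rw [piProj_orbitMeasure_eq_zero hw'] at h
  have h₁ := ((add_eq_zero_iff_of_nonneg (mul_nonneg ha.le (hc₁.1 w))
    (mul_nonneg hb.le (hc₂.1 w))).1 h).1
  exact (mul_eq_zero.1 h₁).resolve_left ha.ne'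

lemma smul_piProj_le (hx : IsSimpleCycle m p x) (hc : c ∈ circulations m) {δ : ℝ}
    (hδ : ∀ j < p, δ ≤ c (window (m + 1) j x)) :
    (p * δ) • piProj (m + 1) (orbitMeasure x p) ≤ c := fun w => by
  by_cases hw : w ∈ Set.range (window (m + 1) · x)
  · obtain ⟨j, rfl⟩ := hw
    dsimp only
    rw [Pi.smul_apply, hx.piProj_window, smul_eq_mul, mul_right_comm,
      mul_inv_cancel₀ (Nat.cast_ne_zero.2 hx.pos.ne'), one_mul, ← window_mod hx.isPeriodicPt j]
    exact hδ _ (Nat.mod_lt _ hx.pos)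
  · rw [Pi.smul_apply, piProj_orbitMeasure_eq_zero hw, smul_zero]
    exact hc.1 w

/-- Subtracting the largest multiple of the cycle's circulation that fits below `c` kills the
weight of at least one arc. -/
lemma eq_or_mem_openSegment (hx : IsSimpleCycle m p x) (hc : c ∈ circulations m)
    (hpos : ∀ j, 0 < c (window (m + 1) j x)) :
    c = piProj (m + 1) (orbitMeasure x p) ∨
      ∃ c' ∈ circulations m, (support c').ncard < (support c).ncard ∧
        c ∈ openSegment ℝ (piProj (m + 1) (orbitMeasure x p)) c' := by
  set γ := piProj (m + 1) (orbitMeasure x p)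
  have hγ : γ ∈ circulations m := hx.piProj_mem_circulations
  obtain ⟨j₀, -, hj₀⟩ := (Finset.range p).exists_min_image (fun j => c (window (m + 1) j x))
    (Finset.nonempty_range_iff.2 hx.pos.ne')
  set ε := p * c (window (m + 1) j₀ x) with hε
  have hle : ε • γ ≤ c := hx.smul_piProj_le hc fun j hj => hj₀ j (Finset.mem_range.2 hj)
  have hε1 : ε ≤ 1 := by
    simpa only [Pi.smul_apply, smul_eq_mul, ← Finset.mul_sum, hγ.2.1, hc.2.1, mul_one] using
      Finset.sum_le_sum fun w (_ : w ∈ Finset.univ) => hle w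
  rcases hε1.lt_or_eq with hε1 | hε1
  · have hε0 : 0 < ε := mul_pos (Nat.cast_pos.2 hx.pos) (hpos j₀)
    set c' := (1 - ε)⁻¹ • (c - ε • γ)
    have hγc : support γ ⊆ support c := fun w hw => by
      obtain ⟨j, rfl⟩ := not_not.1 (mt piProj_orbitMeasure_eq_zero hw)
      exact (hpos j).ne'
    have hεγ : ε * γ (window (m + 1) j₀ x) = c (window (m + 1) j₀ x) := by
      have hp : (p : ℝ) ≠ 0 := Nat.cast_ne_zero.2 hx.pos.ne'
      have hγj₀ : γ (window (m + 1) j₀ x) = (p : ℝ)⁻¹ := hx.piProj_window j₀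
      rw [hγj₀, hε]
      field_simp
    have hsupp : support c' ⊂ support c :=
      support_inv_smul_sub_smul_ssubset hγc (hpos j₀).ne' hεγ
    refine .inr ⟨c', inv_smul_sub_smul_mem_circulations hc hγ hε1 hle, Set.ncard_lt_ncard hsupp,
      ε, 1 - ε, hε0, by linarith, by ring, funext fun w => ?_⟩
    have : 1 - ε ≠ 0 := by linarith
    simp only [c', Pi.add_apply, Pi.smul_apply, Pi.sub_apply, smul_eq_mul]
    field_simp
    ring
  · rw [hε1, one_smul] at hle
    exact .inl (eq_of_le_of_mem_circulations hc hγ hle).symm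

/-- Two simple cycles with the same circulation are rotations of each other: following the
support of the circulation, each arc determines the next one. -/
lemma orbitMeasure_eq_of_piProj_eq {q : ℕ} {y : Omega}
    (hx : IsSimpleCycle m p x) (hy : IsSimpleCycle m q y)
    (h : piProj (m + 1) (orbitMeasure x p) = piProj (m + 1) (orbitMeasure y q)) :
    orbitMeasure x p = orbitMeasure y q := by
  have hrange (k : ℕ) : window (m + 1) k y ∈ Set.range (window (m + 1) · x) := by
    by_contra hk
    have hyk := congrFun h (window (m + 1) k y)
    rw [piProj_orbitMeasure_eq_zero hk, hy.piProj_window] at hyk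
    exact inv_ne_zero (Nat.cast_ne_zero.2 hy.pos.ne') hyk.symm
  obtain ⟨j, hj⟩ := hrange 0
  have hwin (k : ℕ) : window (m + 1) k y = window (m + 1) (j + k) x := by
    induction k with
    | zero => exact hj.symm
    | succ k ih =>
      exact hx.eq_of_init_eq (hrange _) (by rw [init_window, ← tail_window, ih, tail_window]; rfl)
  have hyx : y = shift^[j] x := funext fun k => by
    simpa [window, iterate_shift_apply, add_comm] using congrFun (hwin k) 0
  have hpq : p = q := by
    have hj' := congrFun h (window (m + 1) j x)
    rw [hx.piProj_window, show window (m + 1) j x = window (m + 1) 0 y from hj,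
      hy.piProj_window] at hj'
    exact_mod_cast inv_injective hj'
  rw [hyx, ← hpq, orbitMeasure_iterate_shift hx.isPeriodicPt]

end IsSimpleCycle

lemma exists_first_repeat {α : Type*} [Finite α] (f : ℕ → α) :
    ∃ i p, 0 < p ∧ f (i + p) = f i ∧ Set.InjOn (fun s => f (i + s)) (Set.Iio p) := by
  classical
  have hex : ∃ j, ∃ i < j, f i = f j := by
    obtain ⟨i, j, hne, hij⟩ := Finite.exists_ne_map_eq_of_infinite f
    rcases hne.lt_or_gt with h | h
    exacts [⟨j, i, h, hij⟩, ⟨i, j, h, hij.symm⟩]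
  obtain ⟨i, hi, hfi⟩ := Nat.find_spec hex
  refine ⟨i, Nat.find hex - i, by omega, by rw [Nat.add_sub_cancel' hi.le, hfi],
    fun s hs t ht hst => ?_⟩
  simp only [Set.mem_Iio] at hs ht
  by_contra hne
  rcases lt_or_gt_of_ne hne with h | h
  · exact Nat.find_min hex (by omega : i + t < Nat.find hex) ⟨i + s, by omega, hst⟩
  · exact Nat.find_min hex (by omega : i + s < Nat.find hex) ⟨i + t, by omega, hst.symm⟩

lemma exists_isPeriodicPt_of_window_eq {z : Omega} (hp : 0 < p)
    (hz : window m p z = window m 0 z) :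
    ∃ x : Omega, IsPeriodicPt shift p x ∧ ∀ a < p + m, x a = z a := by
  refine ⟨fun k => z (k % p), funext fun k => by simp [iterate_shift_apply], fun a ha => ?_⟩
  induction a using Nat.strong_induction_on with
  | _ a ih =>
    rcases lt_or_ge a p with hap | hap
    · simp [Nat.mod_eq_of_lt hap]
    · obtain ⟨b, rfl⟩ := Nat.exists_eq_add_of_le' hap
      calc z ((b + p) % p) = z (b % p) := by rw [Nat.add_mod_right]
        _ = z b := ih b (by omega) (by omega)
        _ = z (b + p) := (congrFun hz ⟨b, by omega⟩).symm

lemma exists_snoc_tail_pos (hc : c ∈ circulations m) {w : Fin (m + 1) → Bool} (hw : 0 < c w) :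
    ∃ b, 0 < c (Fin.snoc (Fin.tail w) b) := by
  by_contra! h
  have hin : c w ≤ ∑ b, c (Fin.cons b (Fin.tail w)) := by
    conv_lhs => rw [← Fin.cons_self_tail w]
    exact Finset.single_le_sum (f := fun b => c (Fin.cons b (Fin.tail w))) (fun b _ => hc.1 _)
      (Finset.mem_univ _)
  linarith [hc.2.2 (Fin.tail w), Finset.sum_nonpos fun b (_ : b ∈ Finset.univ) => h b]

lemma exists_forall_window_pos (hc : c ∈ circulations m) :
    ∃ y : Omega, ∀ k, 0 < c (window (m + 1) k y) := by
  obtain ⟨w₀, hw₀⟩ : ∃ w, 0 < c w := by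
    by_contra! h
    linarith [hc.2.1, Finset.sum_nonpos fun w (_ : w ∈ Finset.univ) => h w]
  choose! next hnext using fun w (hw : 0 < c w) => exists_snoc_tail_pos hc hw
  let a (k : ℕ) : Fin (m + 1) → Bool := (fun w => Fin.snoc (Fin.tail w) (next w))^[k] w₀
  have ha_pos (k : ℕ) : 0 < c (a k) := by
    induction k with
    | zero => exact hw₀
    | succ k ih => simp only [a, iterate_succ_apply']; exact hnext _ ih
  have ha (k i : ℕ) (hi : i < m + 1) : a k ⟨i, hi⟩ = a (i + k) 0 := by
    induction i generalizing k with
    | zero => simp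
    | succ i ih =>
      have hstep : a k ⟨i + 1, hi⟩ = a (k + 1) ⟨i, by omega⟩ := by
        simp only [a, iterate_succ_apply']
        rw [show (⟨i, _⟩ : Fin (m + 1)) = Fin.castSucc ⟨i, by omega⟩ from rfl,
          Fin.snoc_castSucc]
        rfl
      rw [hstep, ih, add_right_comm, add_assoc]
  refine ⟨fun k => a k 0, fun k => ?_⟩
  convert ha_pos k using 2
  exact funext fun i => (ha k i i.2).symm

lemma exists_isSimpleCycle (hc : c ∈ circulations m) :
    ∃ x p, IsSimpleCycle m p x ∧ ∀ j, 0 < c (window (m + 1) j x) := by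
  obtain ⟨y, hy⟩ := exists_forall_window_pos hc
  obtain ⟨i, p, hp, hrep, hinj⟩ := exists_first_repeat (window m · y)
  obtain ⟨x, hx, hxy⟩ := exists_isPeriodicPt_of_window_eq (z := shift^[i] y) hp
    (by rwa [window_iterate_shift, window_iterate_shift, add_zero])
  have hwin {n k : ℕ} (h : k + n ≤ p + m) : window n k x = window n (i + k) y := by
    rw [← window_iterate_shift]
    exact funext fun l => hxy _ (by omega)
  refine ⟨x, p, ⟨hp, hx, fun s hs t ht hst => hinj hs ht ?_⟩, fun j => ?_⟩
  · simp only [Set.mem_Iio] at hs ht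
    simpa only [hwin (by omega : s + m ≤ p + m), hwin (by omega : t + m ≤ p + m)] using hst
  · rw [← window_mod hx, hwin (by have := Nat.mod_lt j hp; omega)]
    exact hy _

lemma circulations_subset_rotSet : circulations m ⊆ rotSet (m + 1) := by
  intro c hc
  induction hn : (support c).ncard using Nat.strong_induction_on generalizing c with
  | _ n ih =>
    obtain ⟨x, p, hx, hpos⟩ := exists_isSimpleCycle hc
    have hγ := piProj_orbitMeasure_mem_rotSet (n := m + 1) hx.pos hx.isPeriodicPt
    rcases hx.eq_or_mem_openSegment hc hpos with rfl | ⟨c', hc', hlt, hseg⟩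
    · exact hγ
    · exact (convex_rotSet _).openSegment_subset hγ (ih _ (hn ▸ hlt) hc' rfl) hseg

lemma rotSet_eq_circulations : rotSet (m + 1) = circulations m :=
  subset_antisymm rotSet_subset_circulations circulations_subset_rotSet

lemma exists_isSimpleCycle_of_mem_extremePoints
    (hc : c ∈ Set.extremePoints ℝ (circulations m)) :
    ∃ x p, IsSimpleCycle m p x ∧ piProj (m + 1) (orbitMeasure x p) = c := by
  obtain ⟨x, p, hx, hpos⟩ := exists_isSimpleCycle hc.1
  refine ⟨x, p, hx, ?_⟩
  rcases hx.eq_or_mem_openSegment hc.1 hpos with h | ⟨c', hc', -, hseg⟩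
  · exact h.symm
  · exact hc.2 hx.piProj_mem_circulations hc' hseg

lemma memCn_iff {μ : Measure Omega} :
    MemCn (m + 1) μ ↔ ∃ x p, IsSimpleCycle m p x ∧ μ = orbitMeasure x p := by
  constructor
  · rintro ⟨⟨x, p, hp, hx : IsPeriodicPt shift p x, rfl⟩, hsep⟩
    refine ⟨x, _, ⟨hx.minimalPeriod_pos hp, isPeriodicPt_minimalPeriod shift x,
      fun i hi j hj hij => ?_⟩, orbitMeasure_minimalPeriod hp hx⟩
    have hmem (k : ℕ) (hk : k ∈ Set.Iio (minimalPeriod shift x)) :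
        shift^[k] x ∈ msupp (orbitMeasure x p) := by
      rw [orbitMeasure_minimalPeriod hp hx, msupp_orbitMeasure]
      exact ⟨k, hk, rfl⟩
    refine iterate_injOn_Iio_minimalPeriod hi hj
      (hsep _ (hmem i hi) _ (hmem j hj) fun k hk => ?_)
    simpa [iterate_shift_apply, window] using congrFun hij ⟨k, by omega⟩
  · rintro ⟨x, p, hx, rfl⟩
    refine ⟨⟨x, p, hx.pos, hx.isPeriodicPt, rfl⟩, ?_⟩
    rw [msupp_orbitMeasure]
    rintro _ ⟨i, hi, rfl⟩ _ ⟨j, hj, rfl⟩ hij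
    rw [hx.injOn_window hi hj (funext fun k => by
      simpa [iterate_shift_apply, window] using hij k (by omega))]

lemma injOn_piProj_memCn : Set.InjOn (piProj (m + 1)) {μ | MemCn (m + 1) μ} := by
  rintro _ hμ _ hν h
  obtain ⟨x, p, hx, rfl⟩ := memCn_iff.1 hμ
  obtain ⟨y, q, hy, rfl⟩ := memCn_iff.1 hν
  exact hx.orbitMeasure_eq_of_piProj_eq hy h

lemma bijOn_piProj_memCn : Set.BijOn (piProj (m + 1)) {μ | MemCn (m + 1) μ}
    (Set.extremePoints ℝ (circulations m)) := by
  refine ⟨fun μ hμ => ?_, injOn_piProj_memCn, fun c hc => ?_⟩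
  · obtain ⟨x, p, hx, rfl⟩ := memCn_iff.1 hμ
    exact hx.piProj_mem_extremePoints
  · obtain ⟨x, p, hx, rfl⟩ := exists_isSimpleCycle_of_mem_extremePoints hc
    exact ⟨_, memCn_iff.2 ⟨x, p, hx, rfl⟩, rfl⟩

end RotationSet

/-- **The rotation set is the circulation polytope of the de Bruijn graph.**  For every
`n = m + 1 ≥ 1`, the rotation set `R_n = π_n(M_σ)` equals — identifying coordinates
indexed by words of length `n` with arcs of the de Bruijn graph `G_n` (whose nodes are
the words of length `n − 1`, the arc `ω` going from its initial subword to its final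
subword) — the circulation polytope of `G_n`: the set of nonnegative weight vectors of
total mass `1` satisfying Kirchhoff's current law at every node.  Moreover `R_n` has the
injectivity property: `π_n` restricted to `𝒞_n` is a bijection onto the set of vertices
(extreme points) of `R_n`. -/
theorem rotation_set_eq_deBruijn_circulations (m : ℕ) :
    rotSet (m + 1) =
      {c : (Fin (m + 1) → Bool) → ℝ | (∀ w, 0 ≤ c w) ∧ (∑ w, c w = 1) ∧
        ∀ u : Fin m → Bool, (∑ b : Bool, c (Fin.cons b u)) = ∑ b : Bool, c (Fin.snoc u b)} ∧
    Set.BijOn (piProj (m + 1)) {μ : MeasureTheory.Measure Omega | MemCn (m + 1) μ}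
      (Set.extremePoints ℝ (rotSet (m + 1))) := by
  have hR : rotSet (m + 1) = RotationSet.circulations m := RotationSet.rotSet_eq_circulations
  exact ⟨hR, hR ▸ RotationSet.bijOn_piProj_memCn⟩
end

section
/- Let n ≤ k be positive integers, let μ ∈ C_n and ξ ∈ C_k with per(μ) ≤ per(ξ), and let g be a step function of level k. Then ∫g dξ − ∫g dμ ≤ 2(k−n+1)‖g‖_∞ · ξ(Ω \ B_{μ,n}). -/
open Filter Set MeasureTheory
open scoped ENNReal

/-!
Let `P` and `Q` be the periodic orbits carrying `μ` and `ξ`, so `#P = per μ ≤ per ξ = #Q`. Call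
`v ∈ Q` good if `v, σ v, …, σ^(k-n) v` all lie in `B_{μ,n}`. Since cylinders of level `n - 1`
separate the points of `P`, the orbit of a good `v` shadows an orbit of `P`, so `v` lies in the
cylinder of level `k` of some `φ v ∈ P` and `g v = g (φ v)`; since cylinders of level `k - 1`
separate the points of `Q`, `φ` is injective. Every bad point enters `Ω \ B_{μ,n}` within `k - n`
steps, so there are at most `(k - n + 1) · #(Q \ B_{μ,n})` of them. In the difference of the
averages of `g` over `Q` and over `P` the matched values almost cancel, leaving at most
`2 ‖g‖_∞ · #bad / #Q`.
-/

open Function Finset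
open scoped Classical

section Averages

variable {α : Type*}

lemma abs_sum_le_card_mul {g : α → ℝ} {M : ℝ} (hM : ∀ a, |g a| ≤ M) (s : Finset α) :
    |∑ a ∈ s, g a| ≤ #s * M :=
  (abs_sum_le_sum_abs _ _).trans (by simpa using sum_le_card_nsmul s _ M fun a _ => hM a)

/-- The matched values cancel up to `M #c (1 / #t - 1 / #s)`, which is where `#t ≤ #s` enters. -/
lemma inv_card_mul_sum_sub_le [DecidableEq α] {s t c : Finset α} {φ : α → α} {g : α → ℝ} {M : ℝ}
    (hcs : c ⊆ s) (hφ : ∀ a ∈ c, φ a ∈ t) (hinj : Set.InjOn φ c) (hgφ : ∀ a ∈ c, g (φ a) = g a)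
    (hM : ∀ a, |g a| ≤ M) (hts : #t ≤ #s) (ht : t.Nonempty) :
    (#s : ℝ)⁻¹ * ∑ a ∈ s, g a - (#t : ℝ)⁻¹ * ∑ a ∈ t, g a ≤ 2 * M * (#(s \ c) / #s) := by
  set d := c.image φ
  have hdt : d ⊆ t := fun b hb => by
    obtain ⟨a, ha, rfl⟩ := mem_image.1 hb
    exact hφ a ha
  have hd : #d = #c := card_image_of_injOn hinj
  have hsum_s : ∑ a ∈ s, g a = ∑ b ∈ d, g b + ∑ a ∈ s \ c, g a := by
    rw [sum_image hinj, sum_congr rfl hgφ, add_comm, sum_sdiff hcs]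
  have hsum_t : ∑ a ∈ t, g a = ∑ b ∈ d, g b + ∑ a ∈ t \ d, g a := by
    rw [add_comm, sum_sdiff hdt]
  have hcard_s : (#(s \ c) : ℝ) + #c = #s := by exact_mod_cast card_sdiff_add_card_eq_card hcs
  have hcard_t : (#(t \ d) : ℝ) + #c = #t := by
    rw [← hd]; exact_mod_cast card_sdiff_add_card_eq_card hdt
  have hts' : (#t : ℝ) ≤ #s := by exact_mod_cast hts
  have ht0 : (0 : ℝ) < #t := by exact_mod_cast ht.card_pos
  have hD := (abs_le.1 ((abs_sum_le_card_mul hM d).trans_eq (by rw [hd]))).1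
  have hsc := (abs_le.1 (abs_sum_le_card_mul hM (s \ c))).2
  have htd := (abs_le.1 (abs_sum_le_card_mul hM (t \ d))).1
  have hs0 : (0 : ℝ) < #s := ht0.trans_le hts'
  rw [hsum_s, hsum_t, ← sub_nonneg]
  have key : 0 ≤ 2 * M * #t * #(s \ c) - (#t * (∑ b ∈ d, g b + ∑ a ∈ s \ c, g a)
      - #s * (∑ b ∈ d, g b + ∑ a ∈ t \ d, g a)) := by
    have h1 := mul_nonneg (sub_nonneg.2 hts') (neg_le_iff_add_nonneg.1 hD)
    have h2 := mul_le_mul_of_nonneg_left hsc ht0.le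
    have h3 := mul_le_mul_of_nonneg_left htd hs0.le
    simp only [← hcard_s, ← hcard_t] at h1 h2 h3 ⊢
    linarith
  have hs0' := hs0.ne'
  have ht0' := ht0.ne'
  refine (div_nonneg key (mul_pos hs0 ht0).le).trans_eq ?_
  field_simp

lemma card_filter_not_forall_iterate_mem_le [DecidableEq α] {f : α → α} {s : Finset α}
    (hmaps : Set.MapsTo f s s) (hinj : Set.InjOn f s) (B : Set α) [DecidablePred (· ∈ B)] (m : ℕ) :
    #(s.filter fun a => ¬ ∀ t ≤ m, f^[t] a ∈ B) ≤ (m + 1) * #(s.filter (· ∉ B)) := by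
  have hcover : (s.filter fun a => ¬ ∀ t ≤ m, f^[t] a ∈ B) ⊆
      (range (m + 1)).biUnion fun t => s.filter fun a => f^[t] a ∉ B := by
    intro a ha
    simp only [mem_filter, not_forall] at ha
    obtain ⟨has, t, ht, hB⟩ := ha
    exact mem_biUnion.2 ⟨t, mem_range.2 (Nat.lt_succ_of_le ht), mem_filter.2 ⟨has, hB⟩⟩
  have hiter (t : ℕ) : #(s.filter fun a => f^[t] a ∉ B) ≤ #(s.filter (· ∉ B)) :=
    card_le_card_of_injOn (f^[t])
      (fun a ha => by
        rw [mem_coe, mem_filter] at ha ⊢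
        exact ⟨hmaps.iterate t ha.1, ha.2⟩)
      ((hinj.iterate hmaps t).mono fun a ha => (mem_filter.1 ha).1)
  calc _ ≤ ∑ t ∈ range (m + 1), #(s.filter fun a => f^[t] a ∉ B) :=
        (Finset.card_le_card hcover).trans card_biUnion_le
    _ ≤ ∑ _t ∈ range (m + 1), #(s.filter (· ∉ B)) := sum_le_sum fun t _ => hiter t
    _ = (m + 1) * #(s.filter (· ∉ B)) := by simp

end Averages

def SameCyl (m : ℕ) (x y : Omega) : Prop := ∀ i < m, x i = y i

namespace SameCyl

variable {m m' : ℕ} {x y z : Omega}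

lemma symm (h : SameCyl m x y) : SameCyl m y x := fun i hi => (h i hi).symm

lemma trans (h : SameCyl m x y) (h' : SameCyl m y z) : SameCyl m x z :=
  fun i hi => (h i hi).trans (h' i hi)

lemma mono (h : SameCyl m x y) (hm : m' ≤ m) : SameCyl m' x y := fun i hi => h i (hi.trans_le hm)

end SameCyl

lemma sameCyl_succ_iff {m : ℕ} {x y : Omega} :
    SameCyl (m + 1) x y ↔ x 0 = y 0 ∧ SameCyl m (shift x) (shift y) := by
  refine ⟨fun h => ⟨h 0 m.succ_pos, fun i hi => h (i + 1) (by omega)⟩, fun ⟨h0, h⟩ i hi => ?_⟩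
  cases i with
  | zero => exact h0
  | succ i => exact h i (by omega)

def SeparatedAt (m : ℕ) (S : Set Omega) : Prop := ∀ u ∈ S, ∀ v ∈ S, SameCyl m u v → u = v

lemma MemCn.separatedAt {n : ℕ} {μ : Measure Omega} (h : MemCn n μ) :
    SeparatedAt (n - 1) (msupp μ) :=
  fun u hu v hv huv => h.2 u hu v hv fun i hi => huv i (by omega)

def basin (S : Set Omega) (m : ℕ) : Set Omega := {w | ∃ u ∈ S, SameCyl m w u}

/-- Shadowing: the cylinder of level `n` of each iterate determines the next point of `S`. -/
lemma SeparatedAt.exists_sameCyl_of_iterate_mem_basin {n : ℕ} {S : Set Omega}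
    (hsep : SeparatedAt n S) (hS : Set.MapsTo shift S S) {m : ℕ} {w : Omega}
    (hw : ∀ t ≤ m, shift^[t] w ∈ basin S (n + 1)) : ∃ u ∈ S, SameCyl (n + 1 + m) w u := by
  induction m generalizing w with
  | zero => exact hw 0 le_rfl
  | succ m ih =>
    obtain ⟨u', hu', hwu'⟩ := ih (w := shift w) fun t ht => by
      simpa only [iterate_succ_apply] using hw (t + 1) (by omega)
    obtain ⟨u, hu, hwu⟩ := hw 0 (Nat.zero_le _)
    obtain ⟨h0, hshift⟩ := sameCyl_succ_iff.1 hwu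
    have hu'_eq : shift u = u' :=
      hsep _ (hS hu) _ hu' (hshift.symm.trans (hwu'.mono (by omega)))
    exact ⟨u, hu, sameCyl_succ_iff.2 ⟨h0, hu'_eq ▸ hwu'⟩⟩

section Orbit

variable {α : Type*} [DecidableEq α] {f : α → α} {x : α}

noncomputable def orbitFinset (f : α → α) (x : α) : Finset α :=
  (range (minimalPeriod f x)).image (f^[·] x)

lemma mem_orbitFinset {u : α} : u ∈ orbitFinset f x ↔ ∃ i < minimalPeriod f x, f^[i] x = u := by
  simp [orbitFinset]

lemma card_orbitFinset : #(orbitFinset f x) = minimalPeriod f x := by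
  rw [orbitFinset, card_image_of_injOn, card_range]
  simpa using iterate_injOn_Iio_minimalPeriod (f := f) (x := x)

lemma iterate_mem_orbitFinset (hx : x ∈ periodicPts f) (t : ℕ) : f^[t] x ∈ orbitFinset f x :=
  mem_orbitFinset.2 ⟨t % minimalPeriod f x,
    Nat.mod_lt _ (minimalPeriod_pos_of_mem_periodicPts hx), iterate_mod_minimalPeriod_eq⟩

lemma mapsTo_orbitFinset (hx : x ∈ periodicPts f) :
    Set.MapsTo f (orbitFinset f x) (orbitFinset f x) := by
  intro u hu
  obtain ⟨i, -, rfl⟩ := mem_orbitFinset.1 hu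
  rw [← iterate_succ_apply' f i x]
  exact iterate_mem_orbitFinset hx _

lemma injOn_orbitFinset (hx : x ∈ periodicPts f) : Set.InjOn f (orbitFinset f x) := by
  refine Set.LeftInvOn.injOn (f₁' := f^[minimalPeriod f x - 1]) fun u hu => ?_
  obtain ⟨i, -, rfl⟩ := mem_orbitFinset.1 hu
  rw [← iterate_succ_apply, Nat.succ_eq_add_one,
    Nat.sub_add_cancel (minimalPeriod_pos_of_mem_periodicPts hx)]
  exact ((isPeriodicPt_minimalPeriod f x).apply_iterate i).eq

end Orbit

section UniformMeasure

variable {α : Type*} [MeasurableSpace α]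

noncomputable def uniformOnFinset (s : Finset α) : Measure α :=
  (#s : ℝ≥0∞)⁻¹ • ∑ u ∈ s, Measure.dirac u

variable [MeasurableSingletonClass α]

lemma uniformOnFinset_apply (s : Finset α) (t : Set α) [DecidablePred (· ∈ t)] :
    uniformOnFinset s t = (#s : ℝ≥0∞)⁻¹ * #(s.filter (· ∈ t)) := by
  simp [uniformOnFinset, Measure.dirac_apply, Set.indicator_apply, sum_boole]

lemma integral_uniformOnFinset (s : Finset α) (g : α → ℝ) :
    ∫ u, g u ∂uniformOnFinset s = (#s : ℝ)⁻¹ * ∑ u ∈ s, g u := by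
  rw [uniformOnFinset, integral_smul_measure,
    integral_finsetSum_measure fun u _ => integrable_dirac (by simp)]
  simp [integral_dirac]

end UniformMeasure

lemma msupp_uniformOnFinset (s : Finset Omega) : msupp (uniformOnFinset s) = s := by
  ext w
  have hpos (U : Set Omega) : 0 < (#s : ℝ≥0∞)⁻¹ * #(s.filter (· ∈ U)) ↔ ∃ u ∈ s, u ∈ U := by
    simp [pos_iff_ne_zero, filter_eq_empty_iff]
  simp only [msupp, uniformOnFinset_apply, hpos, Set.mem_ofPred_eq, mem_coe]
  refine ⟨fun h => ?_, fun hw U _ hwU => ⟨w, hw, hwU⟩⟩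
  by_contra hw
  obtain ⟨u, hu, hus⟩ := h (↑s)ᶜ s.finite_toSet.isClosed.isOpen_compl hw
  exact hus hu

lemma orbitMeasure_mul {x : Omega} {p : ℕ} (hx : IsPeriodicPt shift p x) {s : ℕ} (hs : s ≠ 0) :
    orbitMeasure x (p * s) = orbitMeasure x p := by
  have hsum (s : ℕ) : ∑ j ∈ range (p * s), Measure.dirac (shift^[j] x)
      = s • ∑ j ∈ range p, Measure.dirac (shift^[j] x) := by
    induction s with
    | zero => simp
    | succ s ih =>
      rw [Nat.mul_succ, sum_range_add, ih, succ_nsmul]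
      refine congrArg _ (sum_congr rfl fun j _ => ?_)
      rw [add_comm, iterate_add_apply, (hx.mul_const s).eq]
  rw [orbitMeasure, orbitMeasure, hsum, ← Nat.cast_smul_eq_nsmul ℝ≥0∞, smul_smul, Nat.cast_mul,
    ENNReal.mul_inv (by simp) (by simp), mul_assoc,
    ENNReal.inv_mul_cancel (by exact_mod_cast hs) (ENNReal.natCast_ne_top s), mul_one]

lemma orbitMeasure_minimalPeriod (x : Omega) :
    orbitMeasure x (minimalPeriod shift x) = uniformOnFinset (orbitFinset shift x) := by
  rw [orbitMeasure, uniformOnFinset, card_orbitFinset, orbitFinset, sum_image]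
  simpa using iterate_injOn_Iio_minimalPeriod (f := shift) (x := x)

lemma IsPeriodicMeasure.exists_perM_eq {μ : Measure Omega} (hμ : IsPeriodicMeasure μ) :
    ∃ x ∈ periodicPts shift, perM μ = #(orbitFinset shift x) ∧
      μ = uniformOnFinset (orbitFinset shift x) := by
  obtain ⟨hq, x, hx, hμx⟩ : perM μ ∈ {p | 0 < p ∧ ∃ x, shift^[p] x = x ∧ μ = orbitMeasure x p} :=
    Nat.sInf_mem (let ⟨x, p, hp, hx, h⟩ := hμ; ⟨p, hp, x, hx, h⟩)
  have hxper : IsPeriodicPt shift (perM μ) x := hx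
  obtain ⟨s, hs⟩ := hxper.minimalPeriod_dvd
  have hμ' : μ = orbitMeasure x (minimalPeriod shift x) := by
    rw [hμx, hs, orbitMeasure_mul (isPeriodicPt_minimalPeriod shift x)]
    rintro rfl
    simp [hs] at hq
  have hle : perM μ ≤ minimalPeriod shift x :=
    Nat.sInf_le ⟨hxper.minimalPeriod_pos hq, x, iterate_minimalPeriod, hμ'⟩
  refine ⟨x, mk_mem_periodicPts hq hxper, ?_, hμ'.trans (orbitMeasure_minimalPeriod x)⟩
  rw [card_orbitFinset]
  exact hle.antisymm (Nat.le_of_dvd hq hxper.minimalPeriod_dvd)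

lemma bddAbove_range_abs_of_sameCyl {k : ℕ} {g : Omega → ℝ}
    (hg : ∀ x y, SameCyl k x y → g x = g y) : BddAbove (Set.range fun x => |g x|) := by
  refine (Set.finite_range fun v : Fin k → Bool =>
    |g fun i => if h : i < k then v ⟨i, h⟩ else false|).bddAbove.mono ?_
  rintro _ ⟨x, rfl⟩
  exact ⟨fun i => x i, congrArg abs (hg _ x fun i hi => by simp [hi])⟩

lemma inv_card_mul_sum_sub_le_of_shadowing {P Q : Finset Omega} {n m k : ℕ} (hk : k ≤ n + 1 + m)
    (hPsep : SeparatedAt n P) (hPmaps : Set.MapsTo shift P P)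
    (hQsep : SeparatedAt (k - 1) Q) (hQmaps : Set.MapsTo shift Q Q) (hQinj : Set.InjOn shift Q)
    (hPQ : #P ≤ #Q) (hP : P.Nonempty) {g : Omega → ℝ} (hg : ∀ x y, SameCyl k x y → g x = g y)
    {M : ℝ} (hM : ∀ x, |g x| ≤ M) :
    (#Q : ℝ)⁻¹ * ∑ v ∈ Q, g v - (#P : ℝ)⁻¹ * ∑ u ∈ P, g u ≤
      2 * ((m + 1 : ℕ) : ℝ) * M * ((#Q : ℝ)⁻¹ * #(Q.filter (· ∈ (basin P (n + 1))ᶜ))) := by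
  set good := Q.filter fun v => ∀ t ≤ m, shift^[t] v ∈ basin P (n + 1)
  have hshadow (v : Omega) (hv : v ∈ good) : ∃ u ∈ P, SameCyl k v u := by
    obtain ⟨u, hu, hvu⟩ := hPsep.exists_sameCyl_of_iterate_mem_basin hPmaps (mem_filter.1 hv).2
    exact ⟨u, hu, hvu.mono hk⟩
  choose! φ hφP hφ using hshadow
  have hinj : Set.InjOn φ good := fun v hv v' hv' h =>
    hQsep v (mem_filter.1 hv).1 v' (mem_filter.1 hv').1
      (((hφ v hv).trans (h ▸ (hφ v' hv').symm)).mono (Nat.sub_le k 1))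
  have hbad : #(Q \ good) ≤ (m + 1) * #(Q.filter (· ∈ (basin P (n + 1))ᶜ)) := by
    rw [← filter_not]
    exact card_filter_not_forall_iterate_mem_le hQmaps hQinj (basin P (n + 1)) m
  have hM0 : 0 ≤ M := (abs_nonneg _).trans (hM 0)
  calc _ ≤ 2 * M * (#(Q \ good) / #Q) :=
        inv_card_mul_sum_sub_le (filter_subset _ _) hφP hinj (fun v hv => (hg _ _ (hφ v hv)).symm)
          hM hPQ hP
    _ ≤ 2 * M * (((m + 1 : ℕ) : ℝ) * #(Q.filter (· ∈ (basin P (n + 1))ᶜ)) / #Q) := by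
      gcongr
      exact_mod_cast hbad
    _ = _ := by ring

theorem step_function_cancellation_general (n k : ℕ) (hn : 0 < n)
    (μ ξ : MeasureTheory.Measure Omega) (hμ : MemCn n μ) (hξ : MemCn k ξ)
    (hper : perM μ ≤ perM ξ) (g : Omega → ℝ)
    (hg : ∀ x y : Omega, (∀ i, i < k → x i = y i) → g x = g y) :
    (∫ x, g x ∂ξ) - ∫ x, g x ∂μ ≤
      2 * ((k - n + 1 : ℕ) : ℝ) * (⨆ x, |g x|) * (ξ (Bbasin μ n)ᶜ).toReal := by
  obtain ⟨n, rfl⟩ := Nat.exists_eq_add_one_of_ne_zero hn.ne'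
  have hPsep := hμ.separatedAt
  have hQsep := hξ.separatedAt
  obtain ⟨x, hx, hpx, rfl⟩ := hμ.1.exists_perM_eq
  obtain ⟨y, hy, hqy, rfl⟩ := hξ.1.exists_perM_eq
  rw [msupp_uniformOnFinset] at hPsep hQsep
  have hB : Bbasin (uniformOnFinset (orbitFinset shift x)) (n + 1) =
      basin (orbitFinset shift x) (n + 1) := by
    rw [← msupp_uniformOnFinset]; rfl
  rw [integral_uniformOnFinset, integral_uniformOnFinset, hB, uniformOnFinset_apply,
    ENNReal.toReal_mul, ENNReal.toReal_inv, ENNReal.toReal_natCast, ENNReal.toReal_natCast]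
  exact inv_card_mul_sum_sub_le_of_shadowing (m := k - (n + 1)) (by omega) hPsep
    (mapsTo_orbitFinset hx) hQsep (mapsTo_orbitFinset hy) (injOn_orbitFinset hy) (hpx ▸ hqy ▸ hper)
    ⟨x, iterate_mem_orbitFinset hx 0⟩ hg (le_ciSup (bddAbove_range_abs_of_sameCyl hg))

/-- **Cancellation lemma.**  Let `1 ≤ n ≤ k`, let `μ ∈ 𝒞_n` and `ξ ∈ 𝒞_k` with
`per(μ) ≤ per(ξ)`, and let `g` be a step function of level `k`.  Then
`∫ g dξ − ∫ g dμ ≤ 2 (k−n+1) ‖g‖_∞ ξ(Ω \ B_{μ,n})`. -/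
theorem step_function_cancellation (n k : ℕ) (hn : 0 < n) (hnk : n ≤ k)
    (μ ξ : MeasureTheory.Measure Omega) (hμ : MemCn n μ) (hξ : MemCn k ξ)
    (hper : perM μ ≤ perM ξ) (g : Omega → ℝ)
    (hg : ∀ x y : Omega, (∀ i, i < k → x i = y i) → g x = g y) :
    (∫ x, g x ∂ξ) - ∫ x, g x ∂μ ≤
      2 * ((k - n + 1 : ℕ) : ℝ) * (⨆ x, |g x|) * (ξ (Bbasin μ n)ᶜ).toReal :=
  step_function_cancellation_general n k hn μ ξ hμ hξ hper g hg
end
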